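/- arXiv:2111.13775 — 6 statements merged into one kernel-verified Lean document; each statement's English description precedes it below -/
import Mathlib

section
/- Under consistency, positivity, and no unmeasured confounding, the mean of the treated potential outcome is identified by inverse probability weighting: E[A·Y / e(X)] = E[Y(1)], where e(X) is the propensity score. -/
/-!
Write `A = 𝟙{A = 1}` and `m = σ(X)`. Conditional independence of `Y(1)` and `A` given `m` means
that `E[𝟙{A = 1} | σ(Y(1)) ⊔ m] = E[𝟙{A = 1} | m] = e(X)`: both sides have the same integral
over the π-system of sets `B ∩ s` with `B ∈ σ(Y(1))`, `s ∈ m`. By the tower property this gives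
`E[Y(1) A | m] = E[Y(1) | m] e(X)`. Positivity makes `1 / e(X)` a bounded `m`-measurable weight,
which can be pulled out of `E[· | m]`, so
`E[A Y / e(X)] = E[E[Y(1) A | m] / e(X)] = E[E[Y(1) | m]] = E[Y(1)]`.
-/

open MeasureTheory ProbabilityTheory Filter Set

lemma Set.indicator_preimage_one_eq_self {α M : Type*} [Zero M] [One M] {a : α → M}
    (ha : ∀ x, a x = 0 ∨ a x = 1) : (a ⁻¹' {1}).indicator (fun _ => 1) = a := by
  funext x
  by_cases h : a x = 1
  · simp [h]
  · rw [indicator_of_notMem (show x ∉ a ⁻¹' {1} from h), (ha x).resolve_right h]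

namespace MeasurableSpace

variable {Ω : Type*} (m₁ m₂ : MeasurableSpace Ω)

lemma isPiSystem_image2_inter :
    IsPiSystem (image2 (· ∩ ·) {s | MeasurableSet[m₁] s} {s | MeasurableSet[m₂] s}) := by
  rintro _ ⟨s₁, hs₁, s₂, hs₂, rfl⟩ _ ⟨t₁, ht₁, t₂, ht₂, rfl⟩ -
  exact ⟨s₁ ∩ t₁, hs₁.inter ht₁, s₂ ∩ t₂, hs₂.inter ht₂, inter_inter_inter_comm _ _ _ _⟩

lemma generateFrom_image2_inter :
    generateFrom (image2 (· ∩ ·) {s | MeasurableSet[m₁] s} {s | MeasurableSet[m₂] s})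
      = m₁ ⊔ m₂ := by
  refine le_antisymm (generateFrom_le ?_) (sup_le (fun s hs => ?_) (fun s hs => ?_))
  · rintro _ ⟨s₁, hs₁, s₂, hs₂, rfl⟩
    exact (le_sup_left (a := m₁) _ hs₁).inter (le_sup_right (b := m₂) _ hs₂)
  · exact measurableSet_generateFrom ⟨s, hs, univ, MeasurableSet.univ, inter_univ s⟩
  · exact measurableSet_generateFrom ⟨univ, MeasurableSet.univ, s, hs, univ_inter s⟩

end MeasurableSpace

namespace MeasureTheory

variable {Ω : Type*} {m m' : MeasurableSpace Ω} [mΩ : MeasurableSpace Ω] {μ : Measure Ω}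

lemma setIntegral_eq_setIntegral_of_isPiSystem (hm : m ≤ mΩ) {C : Set (Set Ω)}
    (h_eq : m = MeasurableSpace.generateFrom C) (h_inter : IsPiSystem C) (h_univ : univ ∈ C)
    {f g : Ω → ℝ} (hf : Integrable f μ) (hg : Integrable g μ)
    (basic : ∀ s ∈ C, ∫ x in s, f x ∂μ = ∫ x in s, g x ∂μ) {s : Set Ω}
    (hs : MeasurableSet[m] s) : ∫ x in s, f x ∂μ = ∫ x in s, g x ∂μ := by
  induction s, hs using MeasurableSpace.induction_on_inter h_eq h_inter with
  | empty => simp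
  | basic s hs => exact basic s hs
  | compl s hs ih =>
    have h_whole := basic univ h_univ
    rw [setIntegral_univ, setIntegral_univ] at h_whole
    rw [setIntegral_compl (hm s hs) hf, setIntegral_compl (hm s hs) hg, ih, h_whole]
  | iUnion s hd hs ih =>
    rw [integral_iUnion (fun i => hm _ (hs i)) hd hf.integrableOn,
      integral_iUnion (fun i => hm _ (hs i)) hd hg.integrableOn]
    simp_rw [ih]

lemma integral_inv_mul_eq_of_condExp_ae_eq_mul [IsFiniteMeasure μ] (hm' : m' ≤ mΩ)
    {f g w : Ω → ℝ} (hw : StronglyMeasurable[m'] w) {η : ℝ} (hη : 0 < η)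
    (hwη : ∀ᵐ x ∂μ, η ≤ w x) (hg : Integrable g μ) (hfg : μ[g | m'] =ᵐ[μ] μ[f | m'] * w) :
    ∫ x, (w x)⁻¹ * g x ∂μ = ∫ x, f x ∂μ := by
  have hw_inv_bdd : ∀ᵐ x ∂μ, ‖(w x)⁻¹‖ ≤ η⁻¹ := by
    filter_upwards [hwη] with x hx
    rw [norm_inv, Real.norm_of_nonneg (hη.le.trans hx)]
    exact inv_anti₀ hη hx
  calc ∫ x, (w x)⁻¹ * g x ∂μ = ∫ x, μ[w⁻¹ * g | m'] x ∂μ := (integral_condExp hm').symm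
    _ = ∫ x, (w⁻¹ * μ[g | m']) x ∂μ :=
      integral_congr_ae (condExp_stronglyMeasurable_mul_of_bound hm'
        hw.measurable.inv.stronglyMeasurable hg η⁻¹ hw_inv_bdd)
    _ = ∫ x, μ[f | m'] x ∂μ := by
      refine integral_congr_ae ?_
      filter_upwards [hfg, hwη] with x hfgx hwx
      rw [Pi.mul_apply, hfgx, Pi.mul_apply, Pi.inv_apply]
      field_simp [(hη.trans_le hwx).ne']
    _ = ∫ x, f x ∂μ := integral_condExp hm'

end MeasureTheory

namespace ProbabilityTheory.CondIndep

variable {Ω : Type*} {m' m₁ m₂ : MeasurableSpace Ω} [mΩ : MeasurableSpace Ω]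
  [StandardBorelSpace Ω] {hm' : m' ≤ mΩ} {μ : Measure Ω} [IsFiniteMeasure μ]

lemma condExp_indicator_sup_ae_eq (hind : CondIndep m' m₁ m₂ hm' μ) (hm₁ : m₁ ≤ mΩ)
    (hm₂ : m₂ ≤ mΩ) {t : Set Ω} (ht : MeasurableSet[m₂] t) :
    (μ⟦t | m₁ ⊔ m'⟧) =ᵐ[μ] (μ⟦t | m'⟧) := by
  have hsup : m₁ ⊔ m' ≤ mΩ := sup_le hm₁ hm'
  have ht_int : Integrable (t.indicator fun _ => (1 : ℝ)) μ :=
    (integrable_const 1).indicator (hm₂ t ht)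
  refine (ae_eq_condExp_of_forall_setIntegral_eq hsup ht_int
    (fun _ _ _ => integrable_condExp.integrableOn) (fun S hS _ => ?_)
    (stronglyMeasurable_condExp.mono (le_sup_right : m' ≤ m₁ ⊔ m')).aestronglyMeasurable).symm
  refine setIntegral_eq_setIntegral_of_isPiSystem hsup
    (MeasurableSpace.generateFrom_image2_inter m₁ m').symm
    (MeasurableSpace.isPiSystem_image2_inter m₁ m')
    ⟨univ, MeasurableSet.univ, univ, MeasurableSet.univ, inter_univ _⟩
    integrable_condExp ht_int ?_ hS
  rintro _ ⟨B, hB, s, hs, rfl⟩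
  have hB_int : Integrable (B.indicator fun _ => (1 : ℝ)) μ :=
    (integrable_const 1).indicator (hm₁ B hB)
  have hBt_int : Integrable ((B ∩ t).indicator fun _ => (1 : ℝ)) μ :=
    (integrable_const 1).indicator ((hm₁ B hB).inter (hm₂ t ht))
  have hBw : B.indicator (μ⟦t | m'⟧) = (B.indicator fun _ => (1 : ℝ)) * (μ⟦t | m'⟧) := by
    funext x
    by_cases hx : x ∈ B <;> simp [hx]
  have hBw_int : Integrable ((B.indicator fun _ => (1 : ℝ)) * (μ⟦t | m'⟧)) μ :=
    hBw ▸ integrable_condExp.indicator (hm₁ B hB)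
  have hfactor : (μ⟦B ∩ t | m'⟧) =ᵐ[μ] (μ⟦B | m'⟧) * (μ⟦t | m'⟧) :=
    (condIndep_iff m' m₁ m₂ hm' hm₁ hm₂ μ).1 hind B t hB ht
  calc ∫ x in B ∩ s, (μ⟦t | m'⟧) x ∂μ
      = ∫ x in s, ((B.indicator fun _ => (1 : ℝ)) * (μ⟦t | m'⟧)) x ∂μ := by
        rw [← hBw, setIntegral_indicator (hm₁ B hB), inter_comm]
    _ = ∫ x in s, μ[(B.indicator fun _ => (1 : ℝ)) * (μ⟦t | m'⟧) | m'] x ∂μ :=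
        (setIntegral_condExp hm' hBw_int hs).symm
    _ = ∫ x in s, ((μ⟦B | m'⟧) * (μ⟦t | m'⟧)) x ∂μ :=
        setIntegral_congr_ae (hm' s hs) <|
          (condExp_mul_of_stronglyMeasurable_right stronglyMeasurable_condExp hBw_int hB_int).mono
            fun x hx _ => hx
    _ = ∫ x in s, (μ⟦B ∩ t | m'⟧) x ∂μ :=
        setIntegral_congr_ae (hm' s hs) (hfactor.mono fun x hx _ => hx.symm)
    _ = ∫ x in s, (B ∩ t).indicator (fun _ => (1 : ℝ)) x ∂μ := setIntegral_condExp hm' hBt_int hs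
    _ = ∫ x in B ∩ s, t.indicator (fun _ => (1 : ℝ)) x ∂μ := by
        rw [setIntegral_indicator ((hm₁ B hB).inter (hm₂ t ht)),
          setIntegral_indicator (hm₂ t ht), inter_comm B s, inter_assoc]

lemma condExp_mul_indicator_ae_eq (hind : CondIndep m' m₁ m₂ hm' μ) (hm₁ : m₁ ≤ mΩ)
    (hm₂ : m₂ ≤ mΩ) {f : Ω → ℝ} (hf : StronglyMeasurable[m₁] f) (hfi : Integrable f μ)
    {t : Set Ω} (ht : MeasurableSet[m₂] t) :
    μ[f * t.indicator (fun _ => (1 : ℝ)) | m'] =ᵐ[μ] μ[f | m'] * (μ⟦t | m'⟧) := by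
  have hsup : m₁ ⊔ m' ≤ mΩ := sup_le hm₁ hm'
  have ht_int : Integrable (t.indicator fun _ => (1 : ℝ)) μ :=
    (integrable_const 1).indicator (hm₂ t ht)
  have ht_le : ∀ x, |t.indicator (fun _ => (1 : ℝ)) x| ≤ 1 := fun x => by
    by_cases hx : x ∈ t <;> simp [hx]
  have hft_int : Integrable (f * t.indicator fun _ => (1 : ℝ)) μ :=
    hfi.mul_bdd ht_int.aestronglyMeasurable (Eventually.of_forall ht_le)
  have hfw_int : Integrable (f * (μ⟦t | m'⟧)) μ :=
    hfi.mul_bdd (stronglyMeasurable_condExp.mono hm').aestronglyMeasurable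
      (ae_bdd_abs_condExp_of_ae_bdd_abs (Eventually.of_forall ht_le))
  calc μ[f * t.indicator (fun _ => (1 : ℝ)) | m']
      =ᵐ[μ] μ[μ[f * t.indicator (fun _ => (1 : ℝ)) | m₁ ⊔ m'] | m'] :=
        (condExp_condExp_of_le le_sup_right hsup).symm
    _ =ᵐ[μ] μ[f * (μ⟦t | m₁ ⊔ m'⟧) | m'] :=
        condExp_congr_ae (condExp_mul_of_stronglyMeasurable_left
          (hf.mono le_sup_left) hft_int ht_int)
    _ =ᵐ[μ] μ[f * (μ⟦t | m'⟧) | m'] :=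
        condExp_congr_ae (EventuallyEq.rfl.mul (hind.condExp_indicator_sup_ae_eq hm₁ hm₂ ht))
    _ =ᵐ[μ] μ[f | m'] * (μ⟦t | m'⟧) :=
        condExp_mul_of_stronglyMeasurable_right stronglyMeasurable_condExp hfw_int hfi

end ProbabilityTheory.CondIndep

theorem ipw_identifies_treated_mean_general
    {Ω 𝒳 : Type*} [MeasurableSpace Ω] [StandardBorelSpace Ω]
    [m𝒳 : MeasurableSpace 𝒳]
    {μ : Measure Ω} [IsProbabilityMeasure μ]
    (X : Ω → 𝒳) (A Y Y0 Y1 : Ω → ℝ) (e : 𝒳 → ℝ)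
    (hX : Measurable X) (hA : Measurable A)
    (hY1 : Measurable Y1) (he : Measurable e)
    (hY1int : Integrable Y1 μ)
    -- binary treatment
    (hAbin : ∀ ω, A ω = 0 ∨ A ω = 1)
    -- consistency: Y = Y(A) almost surely
    (hcons : ∀ᵐ ω ∂μ, Y ω = if A ω = 1 then Y1 ω else Y0 ω)
    -- the propensity score e(X) is a version of E[A | σ(X)]
    (hps : μ[A | MeasurableSpace.comap X m𝒳] =ᵐ[μ] fun ω => e (X ω))
    -- positivity
    {η : ℝ} (hη : 0 < η)
    (hpos : ∀ᵐ ω ∂μ, η ≤ e (X ω) ∧ e (X ω) ≤ 1 - η)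
    -- no unmeasured confounding: (Y(0), Y(1)) ⫫ A ∣ σ(X)
    (hignor : CondIndepFun (MeasurableSpace.comap X m𝒳) hX.comap_le
      (fun ω => (Y0 ω, Y1 ω)) A μ) :
    ∫ ω, A ω * Y ω / e (X ω) ∂μ = ∫ ω, Y1 ω ∂μ := by
  have hind : CondIndep (MeasurableSpace.comap X m𝒳) (MeasurableSpace.comap Y1 inferInstance)
      (MeasurableSpace.comap A inferInstance) hX.comap_le μ :=
    (condIndepFun_iff_condIndep _ _ _ _ _).1 (hignor.comp measurable_snd measurable_id)
  have hY1A_int : Integrable (Y1 * A) μ :=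
    hY1int.mul_bdd hA.aestronglyMeasurable (c := 1)
      (Eventually.of_forall fun ω => by rcases hAbin ω with h | h <;> simp [h])
  have hprod : μ[Y1 * A | MeasurableSpace.comap X m𝒳] =ᵐ[μ]
      μ[Y1 | MeasurableSpace.comap X m𝒳] * fun ω => e (X ω) := by
    have h := hind.condExp_mul_indicator_ae_eq hY1.comap_le hA.comap_le
      (comap_measurable Y1).stronglyMeasurable hY1int
      (measurableSet_preimage (comap_measurable A) (measurableSet_singleton 1))
    rw [Set.indicator_preimage_one_eq_self hAbin] at h
    exact h.trans (EventuallyEq.rfl.mul hps)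
  calc ∫ ω, A ω * Y ω / e (X ω) ∂μ = ∫ ω, (e (X ω))⁻¹ * (Y1 * A) ω ∂μ := by
        refine integral_congr_ae ?_
        filter_upwards [hcons] with ω hω
        rcases hAbin ω with h | h <;> simp [hω, h, div_eq_inv_mul]
    _ = ∫ ω, Y1 ω ∂μ :=
        integral_inv_mul_eq_of_condExp_ae_eq_mul hX.comap_le
          (he.comp (comap_measurable X)).stronglyMeasurable hη
          (hpos.mono fun _ h => h.1) hY1A_int hprod

/-- **IPW identification of the treated potential-outcome mean.**
Under consistency, positivity, and no unmeasured confounding,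
`E[A·Y / e(X)] = E[Y(1)]`, where `e(X)` is the propensity score. -/
theorem ipw_identifies_treated_mean
    {Ω 𝒳 : Type*} [MeasurableSpace Ω] [StandardBorelSpace Ω]
    [m𝒳 : MeasurableSpace 𝒳]
    {μ : Measure Ω} [IsProbabilityMeasure μ]
    (X : Ω → 𝒳) (A Y Y0 Y1 : Ω → ℝ) (e : 𝒳 → ℝ)
    (hX : Measurable X) (hA : Measurable A) (hY : Measurable Y)
    (hY0 : Measurable Y0) (hY1 : Measurable Y1) (he : Measurable e)
    (hY0int : Integrable Y0 μ) (hY1int : Integrable Y1 μ)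
    -- binary treatment
    (hAbin : ∀ ω, A ω = 0 ∨ A ω = 1)
    -- consistency: Y = Y(A) almost surely
    (hcons : ∀ᵐ ω ∂μ, Y ω = if A ω = 1 then Y1 ω else Y0 ω)
    -- the propensity score e(X) is a version of E[A | σ(X)]
    (hps : μ[A | MeasurableSpace.comap X m𝒳] =ᵐ[μ] fun ω => e (X ω))
    -- positivity
    {η : ℝ} (hη : 0 < η)
    (hpos : ∀ᵐ ω ∂μ, η ≤ e (X ω) ∧ e (X ω) ≤ 1 - η)
    -- no unmeasured confounding: (Y(0), Y(1)) ⫫ A ∣ σ(X)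
    (hignor : CondIndepFun (MeasurableSpace.comap X m𝒳) hX.comap_le
      (fun ω => (Y0 ω, Y1 ω)) A μ) :
    ∫ ω, A ω * Y ω / e (X ω) ∂μ = ∫ ω, Y1 ω ∂μ :=
  ipw_identifies_treated_mean_general (m𝒳 := m𝒳) X A Y Y0 Y1 e hX hA hY1 he hY1int hAbin hcons hps
    hη hpos hignor
end

section
/- Double robustness of the AIPTW functional when the propensity score is correct: under consistency, positivity, and no unmeasured confounding, for ANY bounded measurable function m̃ : {0,1} × 𝒳 → ℝ (a possibly misspecified outcome model), E[ m̃(1, X) + A·(Y − m̃(1, X))/e(X) − m̃(0, X) − (1 − A)·(Y − m̃(0, X))/(1 − e(X)) ] = Δ, where e(X) is the true propensity score. -/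
open MeasureTheory ProbabilityTheory

/-!
Given `σ(X)`, conditional independence factorises `E[A Z | X] = e(X) E[Z | X]` for `Z = Y(1)`,
so the weight `1 / e(X)` turns `E[A Y(1) / e(X)]` into `E[Y(1)]`. The same identity holds for the
`σ(X)`-measurable `Z = m̃(1, X)`, which is trivially conditionally independent of `A`; hence the
augmentation term `A m̃(1, X) / e(X)` has mean `E[m̃(1, X)]` and cancels the plug-in term,
whatever `m̃` is. The control arm is the same argument for `1 - A` and `1 - e(X)`.
-/

theorem MeasureTheory.Integrable.mul_div_of_bound {Ω : Type*} [MeasurableSpace Ω]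
    {μ : Measure Ω} {A Z p : Ω → ℝ} {c η : ℝ} (hZ : Integrable Z μ)
    (hA : AEStronglyMeasurable A μ) (hAbdd : ∀ᵐ ω ∂μ, ‖A ω‖ ≤ c)
    (hp : AEStronglyMeasurable p μ) (hη : 0 < η) (hpη : ∀ᵐ ω ∂μ, η ≤ p ω) :
    Integrable (fun ω ↦ A ω * Z ω / p ω) μ := by
  have hbdd : ∀ᵐ ω ∂μ, ‖A ω / p ω‖ ≤ c / η := by
    filter_upwards [hAbdd, hpη] with ω hAω hpω
    rw [norm_div, Real.norm_of_nonneg (hη.le.trans hpω)]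
    exact div_le_div₀ ((norm_nonneg _).trans hAω) hAω hη hpω
  simpa only [Pi.div_apply, mul_div_right_comm] using
    hZ.bdd_mul (hA.aemeasurable.div hp.aemeasurable).aestronglyMeasurable hbdd

theorem MeasureTheory.condExp_const_sub {Ω : Type*} {m mΩ : MeasurableSpace Ω}
    {μ : Measure Ω} [IsFiniteMeasure μ] (hm : m ≤ mΩ) {f : Ω → ℝ} (hf : Integrable f μ)
    (c : ℝ) :
    μ[fun ω ↦ c - f ω | m] =ᵐ[μ] fun ω ↦ c - μ[f | m] ω := by
  have hsub := condExp_sub (integrable_const c) hf m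
  rwa [condExp_const hm] at hsub

namespace ProbabilityTheory

variable {Ω : Type*} {m mΩ : MeasurableSpace Ω} {μ : Measure Ω} {A Z h p : Ω → ℝ} {c η : ℝ}

theorem integrable_add_mul_sub_div_of_condExp_ae_eq (hZi : Integrable Z μ)
    (hhi : Integrable h μ) (hA : Measurable A) (hAbdd : ∀ᵐ ω ∂μ, ‖A ω‖ ≤ c)
    (hp : μ[A | m] =ᵐ[μ] p) (hη : 0 < η) (hpη : ∀ᵐ ω ∂μ, η ≤ p ω) :
    Integrable (fun ω ↦ h ω + A ω * (Z ω - h ω) / p ω) μ :=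
  hhi.add ((hZi.sub hhi).mul_div_of_bound hA.aestronglyMeasurable hAbdd
    (integrable_condExp.aestronglyMeasurable.congr hp) hη hpη)

variable [StandardBorelSpace Ω] [IsFiniteMeasure μ] {hm : m ≤ mΩ}

/-- For `μ.trim hm`-a.e. `ω`, `f` and `g` are independent under the conditional kernel
`condExpKernel μ m ω`, so the integral of `f * g` against it splits. -/
theorem CondIndepFun.condExp_mul {f g : Ω → ℝ} (hfg : CondIndepFun m hm f g μ)
    (hf : Measurable f) (hg : Measurable g)
    (hfi : Integrable f μ) (hgi : Integrable g μ) (hfgi : Integrable (f * g) μ) :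
    μ[f * g | m] =ᵐ[μ] μ[f | m] * μ[g | m] := by
  have hprod := ae_of_ae_trim hm ((condIndepFun_iff_map_prod_eq_prod_map_map hf hg).1 hfg)
  filter_upwards [condExp_ae_eq_integral_condExpKernel hm hfgi,
    condExp_ae_eq_integral_condExpKernel hm hfi, condExp_ae_eq_integral_condExpKernel hm hgi,
    hprod] with ω hfgω hfω hgω hω
  rw [Kernel.map_apply _ (hf.prodMk hg), Kernel.prod_apply, Kernel.map_apply _ hf,
    Kernel.map_apply _ hg] at hω
  calc μ[f * g | m] ω = ∫ q, q.1 * q.2 ∂(condExpKernel μ m ω).map (fun y ↦ (f y, g y)) := by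
        rw [hfgω, integral_map (hf.prodMk hg).aemeasurable (by fun_prop)]; rfl
    _ = μ[f | m] ω * μ[g | m] ω := by
        rw [hω, integral_prod_mul (fun x ↦ x) (fun y ↦ y), integral_map hf.aemeasurable
          (by fun_prop), integral_map hg.aemeasurable (by fun_prop), hfω, hgω]

theorem CondIndepFun.integral_mul_div_of_condExp_ae_eq (hZA : CondIndepFun m hm Z A μ)
    (hZ : Measurable Z) (hA : Measurable A) (hZi : Integrable Z μ)
    (hAbdd : ∀ᵐ ω ∂μ, ‖A ω‖ ≤ c) (hp : μ[A | m] =ᵐ[μ] p) (hη : 0 < η)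
    (hpη : ∀ᵐ ω ∂μ, η ≤ p ω) :
    ∫ ω, A ω * Z ω / p ω ∂μ = ∫ ω, Z ω ∂μ := by
  have hAi : Integrable A μ := .of_bound hA.aestronglyMeasurable c hAbdd
  have hZA_int : Integrable (Z * A) μ := hZi.mul_bdd hA.aestronglyMeasurable hAbdd
  have hweighted : Integrable ((μ[A | m])⁻¹ * (Z * A)) μ := by
    refine (hZi.mul_div_of_bound hA.aestronglyMeasurable hAbdd
      (integrable_condExp.aestronglyMeasurable.congr hp) hη hpη).congr ?_
    filter_upwards [hp] with ω hω
    simp only [Pi.mul_apply, Pi.inv_apply, hω]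
    ring
  calc ∫ ω, A ω * Z ω / p ω ∂μ = ∫ ω, μ[(μ[A | m])⁻¹ * (Z * A) | m] ω ∂μ := by
        rw [integral_condExp hm]
        refine integral_congr_ae ?_
        filter_upwards [hp] with ω hω
        simp only [Pi.mul_apply, Pi.inv_apply, hω]
        ring
    _ = ∫ ω, (μ[A | m] ω)⁻¹ * μ[Z * A | m] ω ∂μ :=
        integral_congr_ae (condExp_mul_of_stronglyMeasurable_left
          stronglyMeasurable_condExp.measurable.inv.stronglyMeasurable hweighted hZA_int)
    _ = ∫ ω, μ[Z | m] ω ∂μ := by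
        refine integral_congr_ae ?_
        filter_upwards [hZA.condExp_mul hZ hA hZi hAi hZA_int, hp, hpη] with ω hω hpω hηω
        rw [hω, Pi.mul_apply, hpω]
        field_simp [(hη.trans_le hηω).ne']
    _ = ∫ ω, Z ω ∂μ := integral_condExp hm

theorem CondIndepFun.integral_add_mul_sub_div_of_condExp_ae_eq (hZA : CondIndepFun m hm Z A μ)
    (hZ : Measurable Z) (hA : Measurable A) (hZi : Integrable Z μ)
    (hAbdd : ∀ᵐ ω ∂μ, ‖A ω‖ ≤ c) (hp : μ[A | m] =ᵐ[μ] p) (hη : 0 < η)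
    (hpη : ∀ᵐ ω ∂μ, η ≤ p ω) (hh : Measurable[m] h) (hhi : Integrable h μ) :
    ∫ ω, (h ω + A ω * (Z ω - h ω) / p ω) ∂μ = ∫ ω, Z ω ∂μ := by
  have hp_meas := integrable_condExp.aestronglyMeasurable.congr hp
  have hZw := hZi.mul_div_of_bound hA.aestronglyMeasurable hAbdd hp_meas hη hpη
  have hhw := hhi.mul_div_of_bound hA.aestronglyMeasurable hAbdd hp_meas hη hpη
  calc ∫ ω, (h ω + A ω * (Z ω - h ω) / p ω) ∂μ
        = ∫ ω, h ω ∂μ + (∫ ω, A ω * Z ω / p ω ∂μ - ∫ ω, A ω * h ω / p ω ∂μ) := by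
        rw [← integral_sub hZw hhw, ← integral_add hhi (by exact hZw.sub hhw)]
        congr 1; ext ω; ring
    _ = ∫ ω, Z ω ∂μ := by
        rw [hZA.integral_mul_div_of_condExp_ae_eq hZ hA hZi hAbdd hp hη hpη,
          (condIndepFun_of_measurable_left (hm' := hm) hh hA).integral_mul_div_of_condExp_ae_eq
            (hh.mono hm le_rfl) hA hhi hAbdd hp hη hpη]
        ring

end ProbabilityTheory

theorem aiptw_double_robust_ps_correct_general
    {Ω 𝒳 : Type*} [MeasurableSpace Ω] [StandardBorelSpace Ω]
    [m𝒳 : MeasurableSpace 𝒳]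
    {μ : Measure Ω} [IsProbabilityMeasure μ]
    (X : Ω → 𝒳) (A Y Y0 Y1 : Ω → ℝ) (e : 𝒳 → ℝ)
    (hX : Measurable X) (hA : Measurable A)
    (hY0 : Measurable Y0) (hY1 : Measurable Y1)
    (hY0int : Integrable Y0 μ) (hY1int : Integrable Y1 μ)
    -- binary treatment
    (hAbin : ∀ ω, A ω = 0 ∨ A ω = 1)
    -- consistency: Y = Y(A) almost surely
    (hcons : ∀ᵐ ω ∂μ, Y ω = if A ω = 1 then Y1 ω else Y0 ω)
    -- the propensity score e(X) is a version of E[A | σ(X)]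
    (hps : μ[A | MeasurableSpace.comap X m𝒳] =ᵐ[μ] fun ω => e (X ω))
    -- positivity
    {η : ℝ} (hη : 0 < η)
    (hpos : ∀ᵐ ω ∂μ, η ≤ e (X ω) ∧ e (X ω) ≤ 1 - η)
    -- no unmeasured confounding: (Y(0), Y(1)) ⫫ A ∣ σ(X)
    (hignor : CondIndepFun (MeasurableSpace.comap X m𝒳) hX.comap_le
      (fun ω => (Y0 ω, Y1 ω)) A μ)
    -- an arbitrary bounded measurable (possibly misspecified) outcome model
    (mt1 mt0 : 𝒳 → ℝ) (hmt1 : Measurable mt1) (hmt0 : Measurable mt0)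
    (C : ℝ) (hmtbdd : ∀ x, |mt1 x| ≤ C ∧ |mt0 x| ≤ C) :
    ∫ ω, (mt1 (X ω) + A ω * (Y ω - mt1 (X ω)) / e (X ω)
          - mt0 (X ω) - (1 - A ω) * (Y ω - mt0 (X ω)) / (1 - e (X ω))) ∂μ
      = ∫ ω, (Y1 ω - Y0 ω) ∂μ := by
  set m := MeasurableSpace.comap X m𝒳
  have hA1 : ∀ᵐ ω ∂μ, ‖A ω‖ ≤ 1 :=
    .of_forall fun ω ↦ by rcases hAbin ω with h | h <;> simp [h]
  have hA0 : ∀ᵐ ω ∂μ, ‖1 - A ω‖ ≤ 1 :=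
    .of_forall fun ω ↦ by rcases hAbin ω with h | h <;> simp [h]
  have hps0 : μ[fun ω ↦ 1 - A ω | m] =ᵐ[μ] fun ω ↦ 1 - e (X ω) :=
    (condExp_const_sub hX.comap_le (.of_bound hA.aestronglyMeasurable 1 hA1) 1).trans
      (hps.fun_comp (1 - ·))
  have hpos1 : ∀ᵐ ω ∂μ, η ≤ e (X ω) := hpos.mono fun _ ↦ And.left
  have hpos0 : ∀ᵐ ω ∂μ, η ≤ 1 - e (X ω) := hpos.mono fun ω hω ↦ by linarith [hω.2]
  have hmt1X : Measurable[m] fun ω ↦ mt1 (X ω) := hmt1.comp (comap_measurable X)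
  have hmt0X : Measurable[m] fun ω ↦ mt0 (X ω) := hmt0.comp (comap_measurable X)
  have hmt1i : Integrable (fun ω ↦ mt1 (X ω)) μ :=
    .of_bound (hmt1.comp hX).aestronglyMeasurable C (.of_forall fun ω ↦ (hmtbdd (X ω)).1)
  have hmt0i : Integrable (fun ω ↦ mt0 (X ω)) μ :=
    .of_bound (hmt0.comp hX).aestronglyMeasurable C (.of_forall fun ω ↦ (hmtbdd (X ω)).2)
  have hY1A : CondIndepFun m hX.comap_le Y1 A μ := hignor.comp measurable_snd measurable_id
  have hY0A : CondIndepFun m hX.comap_le Y0 (fun ω ↦ 1 - A ω) μ :=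
    hignor.comp measurable_fst (measurable_const_sub 1)
  have hintegrand : (fun ω ↦ mt1 (X ω) + A ω * (Y ω - mt1 (X ω)) / e (X ω)
          - mt0 (X ω) - (1 - A ω) * (Y ω - mt0 (X ω)) / (1 - e (X ω)))
      =ᵐ[μ] fun ω ↦ (mt1 (X ω) + A ω * (Y1 ω - mt1 (X ω)) / e (X ω))
          - (mt0 (X ω) + (1 - A ω) * (Y0 ω - mt0 (X ω)) / (1 - e (X ω))) := by
    filter_upwards [hcons] with ω hYω
    rcases hAbin ω with h | h
    · simp only [h, hYω, zero_ne_one, ↓reduceIte, zero_mul, zero_div, add_zero, sub_zero,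
        one_mul]
      ring
    · simp [h, hYω]
  rw [integral_congr_ae hintegrand,
    integral_sub (integrable_add_mul_sub_div_of_condExp_ae_eq hY1int hmt1i hA hA1 hps hη hpos1)
      (integrable_add_mul_sub_div_of_condExp_ae_eq hY0int hmt0i (hA.const_sub 1) hA0 hps0 hη
        hpos0),
    hY1A.integral_add_mul_sub_div_of_condExp_ae_eq hY1 hA hY1int hA1 hps hη hpos1 hmt1X hmt1i,
    hY0A.integral_add_mul_sub_div_of_condExp_ae_eq hY0 (hA.const_sub 1) hY0int hA0 hps0 hη hpos0
      hmt0X hmt0i,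
    integral_sub hY1int hY0int]

/-- **Double robustness of the AIPTW functional with a correct propensity score.**
Under consistency, positivity, and no unmeasured confounding, for ANY bounded
measurable (possibly misspecified) outcome model `m̃ : {0,1} × 𝒳 → ℝ`
(encoded by its two sections `mt1 = m̃(1,·)` and `mt0 = m̃(0,·)`),
`E[ m̃(1,X) + A(Y − m̃(1,X))/e(X) − m̃(0,X) − (1−A)(Y − m̃(0,X))/(1−e(X)) ] = Δ`,
where `e(X)` is the true propensity score and `Δ = E[Y(1) − Y(0)]`. -/
theorem aiptw_double_robust_ps_correct
    {Ω 𝒳 : Type*} [MeasurableSpace Ω] [StandardBorelSpace Ω]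
    [m𝒳 : MeasurableSpace 𝒳]
    {μ : Measure Ω} [IsProbabilityMeasure μ]
    (X : Ω → 𝒳) (A Y Y0 Y1 : Ω → ℝ) (e : 𝒳 → ℝ)
    (hX : Measurable X) (hA : Measurable A) (hY : Measurable Y)
    (hY0 : Measurable Y0) (hY1 : Measurable Y1) (he : Measurable e)
    (hY0int : Integrable Y0 μ) (hY1int : Integrable Y1 μ)
    -- binary treatment
    (hAbin : ∀ ω, A ω = 0 ∨ A ω = 1)
    -- consistency: Y = Y(A) almost surely
    (hcons : ∀ᵐ ω ∂μ, Y ω = if A ω = 1 then Y1 ω else Y0 ω)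
    -- the propensity score e(X) is a version of E[A | σ(X)]
    (hps : μ[A | MeasurableSpace.comap X m𝒳] =ᵐ[μ] fun ω => e (X ω))
    -- positivity
    {η : ℝ} (hη : 0 < η)
    (hpos : ∀ᵐ ω ∂μ, η ≤ e (X ω) ∧ e (X ω) ≤ 1 - η)
    -- no unmeasured confounding: (Y(0), Y(1)) ⫫ A ∣ σ(X)
    (hignor : CondIndepFun (MeasurableSpace.comap X m𝒳) hX.comap_le
      (fun ω => (Y0 ω, Y1 ω)) A μ)
    -- an arbitrary bounded measurable (possibly misspecified) outcome model
    (mt1 mt0 : 𝒳 → ℝ) (hmt1 : Measurable mt1) (hmt0 : Measurable mt0)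
    (C : ℝ) (hmtbdd : ∀ x, |mt1 x| ≤ C ∧ |mt0 x| ≤ C) :
    ∫ ω, (mt1 (X ω) + A ω * (Y ω - mt1 (X ω)) / e (X ω)
          - mt0 (X ω) - (1 - A ω) * (Y ω - mt0 (X ω)) / (1 - e (X ω))) ∂μ
      = ∫ ω, (Y1 ω - Y0 ω) ∂μ :=
  aiptw_double_robust_ps_correct_general (m𝒳 := m𝒳) X A Y Y0 Y1 e hX hA hY0 hY1 hY0int hY1int hAbin
    hcons hps hη hpos hignor mt1 mt0 hmt1 hmt0 C hmtbdd
end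

section
/- Double robustness of the AIPTW functional when the outcome model is correct: under consistency, positivity, and no unmeasured confounding, for ANY measurable function ẽ : 𝒳 → ℝ with η ≤ ẽ(x) ≤ 1 − η for all x (a possibly misspecified propensity model), E[ m(1, X) + A·(Y − m(1, X))/ẽ(X) − m(0, X) − (1 − A)·(Y − m(0, X))/(1 − ẽ(X)) ] = Δ, where m(a, X) is the true conditional outcome mean. -/
/-!
Ignorability makes `Y(a)` and `1{A = a}` conditionally independent given `X`, so
`E[1{A = a} Y | X] = E[Y(a) | X] · P(A = a | X)`; since `P(A = a | X) > 0`, the true outcome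
mean is `m(a, X) = E[Y(a) | X]` and `E[m(a, X)] = E[Y(a)]`. The residual `1{A = a} (Y - m(a, X))`
then has conditional mean zero given `X`, so it integrates to zero against any bounded
`σ(X)`-measurable weight, in particular against `1 / ẽ(X)` and `1 / (1 - ẽ(X))`, whatever `ẽ` is.
-/

open MeasureTheory ProbabilityTheory Filter

namespace MeasureTheory

variable {Ω : Type*} {m mΩ : MeasurableSpace Ω} {μ : Measure Ω}

theorem integral_mul_eq_zero_of_condExp_ae_eq_zero (hm : m ≤ mΩ) [SigmaFinite (μ.trim hm)]
    {w Z : Ω → ℝ} (hw : StronglyMeasurable[m] w) (hZ : Integrable Z μ)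
    (hwZ : Integrable (w * Z) μ) (hZ0 : μ[Z | m] =ᵐ[μ] 0) :
    ∫ ω, (w * Z) ω ∂μ = 0 := by
  rw [← integral_condExp hm]
  refine integral_eq_zero_of_ae ?_
  filter_upwards [condExp_mul_of_stronglyMeasurable_left hw hwZ hZ, hZ0] with ω h h0
  simp [h, h0]

theorem condExp_mul_sub_mul_ae_eq_zero {T Y M : Ω → ℝ} (hM : StronglyMeasurable[m] M)
    (hT : Integrable T μ) (hTY : Integrable (T * Y) μ) (hMT_int : Integrable (M * T) μ)
    (hMT : μ[T * Y | m] =ᵐ[μ] M * μ[T | m]) :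
    μ[T * Y - M * T | m] =ᵐ[μ] 0 := by
  filter_upwards [condExp_sub hTY hMT_int m, condExp_mul_of_stronglyMeasurable_left hM hMT_int hT,
    hMT] with ω hsub hpull hω
  simp [hsub, hpull, hω]

theorem ae_condExp_ite_eq_ne_zero [IsFiniteMeasure μ] (hm : m ≤ mΩ) {A p : Ω → ℝ}
    (hA : Measurable A) (hAbin : ∀ ω, A ω = 0 ∨ A ω = 1) (hAp : μ[A | m] =ᵐ[μ] p)
    (hp : ∀ᵐ ω ∂μ, 0 < p ω ∧ p ω < 1) {a : ℝ} (ha : a = 0 ∨ a = 1) :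
    ∀ᵐ ω ∂μ, μ[fun ω => if A ω = a then (1 : ℝ) else 0 | m] ω ≠ 0 := by
  rcases ha with rfl | rfl
  · have hA_int : Integrable A μ :=
      .of_bound hA.aestronglyMeasurable 1 <| .of_forall fun ω => by
        rcases hAbin ω with h | h <;> simp [h]
    have h1A : (fun ω => if A ω = 0 then (1 : ℝ) else 0) = (fun _ => 1) - A := by
      funext ω; rcases hAbin ω with h | h <;> simp [h]
    filter_upwards [condExp_sub (integrable_const 1) hA_int m, hAp, hp] with ω h hω hpω
    rw [h1A, h, Pi.sub_apply, condExp_const hm, hω]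
    exact (sub_pos.2 hpω.2).ne'
  · have hA1 : (fun ω => if A ω = 1 then (1 : ℝ) else 0) = A := by
      funext ω; rcases hAbin ω with h | h <;> simp [h]
    filter_upwards [hAp, hp] with ω hω hpω
    rw [hA1, hω]
    exact hpω.1.ne'

end MeasureTheory

namespace ProbabilityTheory

variable {Ω : Type*} {m mΩ : MeasurableSpace Ω} [StandardBorelSpace Ω] {μ : Measure Ω}
  [IsFiniteMeasure μ]

theorem CondIndepFun.ae_indepFun_condExpKernel {β β' : Type*} [MeasurableSpace β]
    [MeasurableSpace β'] [MeasurableSpace.CountableOrCountablyGenerated Ω (β × β')]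
    {hm : m ≤ mΩ} {f : Ω → β} {g : Ω → β'} (hf : Measurable f) (hg : Measurable g)
    (h : CondIndepFun m hm f g μ) :
    ∀ᵐ ω ∂μ, IndepFun f g (condExpKernel μ m ω) := by
  filter_upwards [ae_of_ae_trim hm ((condIndepFun_iff_map_prod_eq_prod_map_map hf hg).1 h)]
    with ω hω
  rw [indepFun_iff_map_prod_eq_prod_map_map hf.aemeasurable hg.aemeasurable]
  simpa [Kernel.map_apply _ (hf.prodMk hg), Kernel.prod_apply, Kernel.map_apply _ hf,
    Kernel.map_apply _ hg] using hω

theorem CondIndepFun.condExp_mul_ae_eq {hm : m ≤ mΩ} {f g : Ω → ℝ} (hf : Measurable f)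
    (hg : Measurable g) (h : CondIndepFun m hm f g μ) (hf_int : Integrable f μ)
    (hg_int : Integrable g μ) (hfg_int : Integrable (f * g) μ) :
    μ[f * g | m] =ᵐ[μ] μ[f | m] * μ[g | m] := by
  filter_upwards [h.ae_indepFun_condExpKernel hf hg,
    condExp_ae_eq_integral_condExpKernel hm hfg_int, condExp_ae_eq_integral_condExpKernel hm hf_int,
    condExp_ae_eq_integral_condExpKernel hm hg_int] with ω hind hfg hf' hg'
  rw [hfg, Pi.mul_apply, hf', hg']
  exact hind.integral_fun_mul_eq_mul_integral hf.aestronglyMeasurable hg.aestronglyMeasurable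

theorem ae_eq_condExp_of_condExp_mul_ae_eq {hm : m ≤ mΩ} {T Y Ya M : Ω → ℝ} {C : ℝ}
    (hT : Measurable T) (hT_bdd : ∀ᵐ ω ∂μ, ‖T ω‖ ≤ C) (hYa : Measurable Ya)
    (hYa_int : Integrable Ya μ) (hcons : T * Y =ᵐ[μ] T * Ya) (hind : CondIndepFun m hm Ya T μ)
    (hMT : μ[T * Y | m] =ᵐ[μ] M * μ[T | m]) (hpos : ∀ᵐ ω ∂μ, μ[T | m] ω ≠ 0) :
    M =ᵐ[μ] μ[Ya | m] := by
  have hYaT : μ[T * Y | m] =ᵐ[μ] μ[Ya | m] * μ[T | m] := by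
    refine (condExp_congr_ae (hcons.trans (.of_forall fun ω => mul_comm _ _))).trans ?_
    exact hind.condExp_mul_ae_eq hYa hT hYa_int (.of_bound hT.aestronglyMeasurable C hT_bdd)
      (hYa_int.mul_bdd hT.aestronglyMeasurable hT_bdd)
  filter_upwards [hMT.symm.trans hYaT, hpos] with ω h hω
  exact mul_right_cancel₀ hω h

theorem integrable_and_integral_add_mul_residual_eq {hm : m ≤ mΩ} {T Y Ya M w : Ω → ℝ}
    {C C' : ℝ} (hT : Measurable T) (hT_bdd : ∀ᵐ ω ∂μ, ‖T ω‖ ≤ C) (hYa : Measurable Ya)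
    (hYa_int : Integrable Ya μ) (hcons : T * Y =ᵐ[μ] T * Ya) (hind : CondIndepFun m hm Ya T μ)
    (hM : StronglyMeasurable[m] M) (hMT : μ[T * Y | m] =ᵐ[μ] M * μ[T | m])
    (hpos : ∀ᵐ ω ∂μ, μ[T | m] ω ≠ 0) (hw : StronglyMeasurable[m] w)
    (hw_bdd : ∀ᵐ ω ∂μ, ‖w ω‖ ≤ C') :
    Integrable (M + w * (T * Y - M * T)) μ ∧
      ∫ ω, (M + w * (T * Y - M * T)) ω ∂μ = ∫ ω, Ya ω ∂μ := by
  have hM_eq : M =ᵐ[μ] μ[Ya | m] :=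
    ae_eq_condExp_of_condExp_mul_ae_eq hT hT_bdd hYa hYa_int hcons hind hMT hpos
  have hM_int : Integrable M μ := integrable_condExp.congr hM_eq.symm
  have hMT_int : Integrable (M * T) μ := hM_int.mul_bdd hT.aestronglyMeasurable hT_bdd
  have hTY : Integrable (T * Y) μ :=
    (hYa_int.bdd_mul hT.aestronglyMeasurable hT_bdd).congr hcons.symm
  have hR_int : Integrable (T * Y - M * T) μ := hTY.sub hMT_int
  have hwR : Integrable (w * (T * Y - M * T)) μ :=
    hR_int.bdd_mul (hw.mono hm).aestronglyMeasurable hw_bdd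
  have hR0 : ∫ ω, (w * (T * Y - M * T)) ω ∂μ = 0 :=
    integral_mul_eq_zero_of_condExp_ae_eq_zero hm hw hR_int hwR <|
      condExp_mul_sub_mul_ae_eq_zero hM (.of_bound hT.aestronglyMeasurable C hT_bdd) hTY
        hMT_int hMT
  refine ⟨hM_int.add hwR, ?_⟩
  rw [integral_add' hM_int hwR, hR0, add_zero, integral_congr_ae hM_eq, integral_condExp hm]

end ProbabilityTheory

theorem aiptw_double_robust_om_correct_general
    {Ω 𝒳 : Type*} [MeasurableSpace Ω] [StandardBorelSpace Ω]
    [m𝒳 : MeasurableSpace 𝒳]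
    {μ : Measure Ω} [IsProbabilityMeasure μ]
    (X : Ω → 𝒳) (A Y Y0 Y1 : Ω → ℝ) (e : 𝒳 → ℝ) (m1 m0 : 𝒳 → ℝ)
    (hX : Measurable X) (hA : Measurable A)
    (hY0 : Measurable Y0) (hY1 : Measurable Y1)
    (hm1 : Measurable m1) (hm0 : Measurable m0)
    (hY0int : Integrable Y0 μ) (hY1int : Integrable Y1 μ)
    -- binary treatment
    (hAbin : ∀ ω, A ω = 0 ∨ A ω = 1)
    -- consistency: Y = Y(A) almost surely
    (hcons : ∀ᵐ ω ∂μ, Y ω = if A ω = 1 then Y1 ω else Y0 ω)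
    -- the propensity score e(X) is a version of E[A | σ(X)]
    (hps : μ[A | MeasurableSpace.comap X m𝒳] =ᵐ[μ] fun ω => e (X ω))
    -- positivity
    {η : ℝ} (hη : 0 < η)
    (hpos : ∀ᵐ ω ∂μ, η ≤ e (X ω) ∧ e (X ω) ≤ 1 - η)
    -- no unmeasured confounding: (Y(0), Y(1)) ⫫ A ∣ σ(X)
    (hignor : CondIndepFun (MeasurableSpace.comap X m𝒳) hX.comap_le
      (fun ω => (Y0 ω, Y1 ω)) A μ)
    -- m(1,·) is a true conditional outcome mean
    (hcm1 : μ[fun ω => (if A ω = 1 then (1 : ℝ) else 0) * Y ω | MeasurableSpace.comap X m𝒳]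
      =ᵐ[μ] fun ω => m1 (X ω) *
        (μ[fun ω' => (if A ω' = 1 then (1 : ℝ) else 0) | MeasurableSpace.comap X m𝒳]) ω)
    -- m(0,·) is a true conditional outcome mean
    (hcm0 : μ[fun ω => (if A ω = 0 then (1 : ℝ) else 0) * Y ω | MeasurableSpace.comap X m𝒳]
      =ᵐ[μ] fun ω => m0 (X ω) *
        (μ[fun ω' => (if A ω' = 0 then (1 : ℝ) else 0) | MeasurableSpace.comap X m𝒳]) ω)
    -- an arbitrary measurable (possibly misspecified) propensity model bounded away from 0 and 1
    (et : 𝒳 → ℝ) (het : Measurable et)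
    (hetbdd : ∀ x, η ≤ et x ∧ et x ≤ 1 - η) :
    ∫ ω, (m1 (X ω) + A ω * (Y ω - m1 (X ω)) / et (X ω)
          - m0 (X ω) - (1 - A ω) * (Y ω - m0 (X ω)) / (1 - et (X ω))) ∂μ
      = ∫ ω, (Y1 ω - Y0 ω) ∂μ := by
  have hXG : Measurable[MeasurableSpace.comap X m𝒳] X := comap_measurable X
  have hφ : ∀ a : ℝ, Measurable fun b : ℝ => if b = a then (1 : ℝ) else 0 := fun a =>
    measurable_const.ite (measurableSet_singleton a) measurable_const
  have hT_bdd : ∀ a : ℝ, ∀ᵐ ω ∂μ, ‖if A ω = a then (1 : ℝ) else 0‖ ≤ 1 := fun a =>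
    .of_forall fun ω => by split_ifs <;> simp
  have hp : ∀ᵐ ω ∂μ, 0 < e (X ω) ∧ e (X ω) < 1 :=
    hpos.mono fun ω h => ⟨by linarith, by linarith⟩
  have hw_bdd : ∀ {t : 𝒳 → ℝ}, (∀ x, η ≤ t x) → ∀ᵐ ω ∂μ, ‖(t (X ω))⁻¹‖ ≤ η⁻¹ := fun h =>
    .of_forall fun ω => by
      rw [norm_inv, Real.norm_of_nonneg (hη.le.trans (h _))]
      exact inv_anti₀ hη (h _)
  obtain ⟨hint1, heq1⟩ := integrable_and_integral_add_mul_residual_eq ((hφ 1).comp hA) (hT_bdd 1)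
    hY1 hY1int (by filter_upwards [hcons] with ω h; split_ifs at h ⊢ <;> simp [*])
    (hignor.comp measurable_snd (hφ 1))
    (hm1.comp hXG).stronglyMeasurable hcm1
    (ae_condExp_ite_eq_ne_zero hX.comap_le hA hAbin hps hp (.inr rfl))
    (het.comp hXG).inv.stronglyMeasurable (hw_bdd fun x => (hetbdd x).1)
  obtain ⟨hint0, heq0⟩ := integrable_and_integral_add_mul_residual_eq ((hφ 0).comp hA) (hT_bdd 0)
    hY0 hY0int (by filter_upwards [hcons] with ω h; split_ifs at h ⊢ <;> simp_all)
    (hignor.comp measurable_fst (hφ 0))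
    (hm0.comp hXG).stronglyMeasurable hcm0
    (ae_condExp_ite_eq_ne_zero hX.comap_le hA hAbin hps hp (.inl rfl))
    (measurable_const.sub (het.comp hXG)).inv.stronglyMeasurable
    (hw_bdd (t := fun x => 1 - et x) fun x => by linarith [(hetbdd x).2])
  rw [integral_sub hY1int hY0int, ← heq1, ← heq0, ← integral_sub hint1 hint0]
  refine integral_congr_ae (.of_forall fun ω => ?_)
  simp only [Pi.add_apply, Pi.mul_apply, Pi.sub_apply, Pi.inv_apply, Function.comp_apply]
  rcases hAbin ω with h | h <;> simp only [h, ↓reduceIte, zero_ne_one, one_ne_zero] <;> ring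

/-- **Double robustness of the AIPTW functional with a correct outcome model.**
Under consistency, positivity, and no unmeasured confounding, for ANY measurable
(possibly misspecified) propensity model `ẽ : 𝒳 → ℝ` with `η ≤ ẽ(x) ≤ 1 − η` for
all `x`,
`E[ m(1,X) + A(Y − m(1,X))/ẽ(X) − m(0,X) − (1−A)(Y − m(0,X))/(1−ẽ(X)) ] = Δ`,
where `m(a,·)` is the true conditional outcome mean and `Δ = E[Y(1) − Y(0)]`. -/
theorem aiptw_double_robust_om_correct
    {Ω 𝒳 : Type*} [MeasurableSpace Ω] [StandardBorelSpace Ω]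
    [m𝒳 : MeasurableSpace 𝒳]
    {μ : Measure Ω} [IsProbabilityMeasure μ]
    (X : Ω → 𝒳) (A Y Y0 Y1 : Ω → ℝ) (e : 𝒳 → ℝ) (m1 m0 : 𝒳 → ℝ)
    (hX : Measurable X) (hA : Measurable A) (hY : Measurable Y)
    (hY0 : Measurable Y0) (hY1 : Measurable Y1) (he : Measurable e)
    (hm1 : Measurable m1) (hm0 : Measurable m0)
    (hY0int : Integrable Y0 μ) (hY1int : Integrable Y1 μ)
    -- binary treatment
    (hAbin : ∀ ω, A ω = 0 ∨ A ω = 1)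
    -- consistency: Y = Y(A) almost surely
    (hcons : ∀ᵐ ω ∂μ, Y ω = if A ω = 1 then Y1 ω else Y0 ω)
    -- the propensity score e(X) is a version of E[A | σ(X)]
    (hps : μ[A | MeasurableSpace.comap X m𝒳] =ᵐ[μ] fun ω => e (X ω))
    -- positivity
    {η : ℝ} (hη : 0 < η)
    (hpos : ∀ᵐ ω ∂μ, η ≤ e (X ω) ∧ e (X ω) ≤ 1 - η)
    -- no unmeasured confounding: (Y(0), Y(1)) ⫫ A ∣ σ(X)
    (hignor : CondIndepFun (MeasurableSpace.comap X m𝒳) hX.comap_le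
      (fun ω => (Y0 ω, Y1 ω)) A μ)
    -- m(1,·) is a true conditional outcome mean
    (hcm1 : μ[fun ω => (if A ω = 1 then (1 : ℝ) else 0) * Y ω | MeasurableSpace.comap X m𝒳]
      =ᵐ[μ] fun ω => m1 (X ω) *
        (μ[fun ω' => (if A ω' = 1 then (1 : ℝ) else 0) | MeasurableSpace.comap X m𝒳]) ω)
    -- m(0,·) is a true conditional outcome mean
    (hcm0 : μ[fun ω => (if A ω = 0 then (1 : ℝ) else 0) * Y ω | MeasurableSpace.comap X m𝒳]
      =ᵐ[μ] fun ω => m0 (X ω) *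
        (μ[fun ω' => (if A ω' = 0 then (1 : ℝ) else 0) | MeasurableSpace.comap X m𝒳]) ω)
    -- an arbitrary measurable (possibly misspecified) propensity model bounded away from 0 and 1
    (et : 𝒳 → ℝ) (het : Measurable et)
    (hetbdd : ∀ x, η ≤ et x ∧ et x ≤ 1 - η) :
    ∫ ω, (m1 (X ω) + A ω * (Y ω - m1 (X ω)) / et (X ω)
          - m0 (X ω) - (1 - A ω) * (Y ω - m0 (X ω)) / (1 - et (X ω))) ∂μ
      = ∫ ω, (Y1 ω - Y0 ω) ∂μ :=
  aiptw_double_robust_om_correct_general (m𝒳 := m𝒳) X A Y Y0 Y1 e m1 m0 hX hA hY0 hY1 hm1 hm0 hY0int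
    hY1int hAbin hcons hps hη hpos hignor hcm1 hcm0 et het hetbdd
end

section
/- Double robustness of the stacked AIPTW estimating equation (Example 3): let U(O; θ) = ( g(X)(A − e(X; α)), h(A, X)(Y − m(A, X; β)), [m(1, X; β) + A(Y − m(1, X; β))/e(X; α)] − [m(0, X; β) + (1 − A)(Y − m(0, X; β))/(1 − e(X; α))] − Δ′ ), with θ = (α, β, Δ′). Suppose (α₀, β₀) is the unique zero of the first two blocks, i.e. the unique (α, β) with E[g(X)(A − e(X; α))] = 0 and E[h(A, X)(Y − m(A, X; β))] = 0. If, in addition, EITHER e(X; α₀) = e(X) a.s. (propensity model correct) OR m(a, X; β₀) is a version of E[Y | A = a, X] for a ∈ {0,1} (outcome model correct), then under consistency, positivity, and no unmeasured confounding, E[U(O; θ)] = 0 if and only if θ = (α₀, β₀, Δ), where Δ = E[Y(1) − Y(0)]. -/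
/-!
Since `(α₀, β₀)` is the only zero of the first two blocks, everything reduces to the third block
at `(α₀, β₀)`. Conditionally on `σ(X)`, the treatment indicator `A` is independent of `Y(1)`, so
`E[A Y(1) | X] = e(X) E[Y(1) | X]` and, for a propensity model `p` and an outcome model `r`,
`E[r + A (Y(1) - r) / p | X] = r + e(X) (E[Y(1) | X] - r) / p`. This is `E[Y(1) | X]` as soon as
`p = e(X)` or `r e(X) = E[A Y(1) | X]` (then `r = E[Y(1) | X]` by positivity), and the control
arm is the same computation for `1 - A`. Integrating, the third block is `E[Y(1) - Y(0)] - Δ'`.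
-/

open MeasureTheory ProbabilityTheory

section

variable {Ω : Type*} {m mΩ : MeasurableSpace Ω} {μ : Measure Ω}

theorem norm_le_one_of_binary {a : ℝ} (h : a = 0 ∨ a = 1) : ‖a‖ ≤ 1 := by
  rcases h with rfl | rfl <;> simp

theorem integrable_of_binary [IsFiniteMeasure μ] {A : Ω → ℝ} (hA : Measurable A)
    (hAbin : ∀ ω, A ω = 0 ∨ A ω = 1) : Integrable A μ :=
  .of_bound hA.aestronglyMeasurable 1 (ae_of_all _ fun ω => norm_le_one_of_binary (hAbin ω))

theorem indicator_preimage_one_of_binary {A : Ω → ℝ} (hA : ∀ ω, A ω = 0 ∨ A ω = 1) :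
    (A ⁻¹' {1}).indicator (fun _ => 1) = A := by
  ext ω
  rcases hA ω with h | h <;> simp [h]

theorem abs_condExp_le_one_of_binary {A : Ω → ℝ} (hA : ∀ ω, A ω = 0 ∨ A ω = 1) :
    ∀ᵐ ω ∂μ, |μ[A | m] ω| ≤ 1 :=
  ae_bdd_abs_condExp_of_ae_bdd_abs (ae_of_all _ fun ω => norm_le_one_of_binary (hA ω))

theorem integral_mul_eq_of_forall_setIntegral_preimage_eq {φ ψ Y : Ω → ℝ} (hY : Measurable Y)
    (hφ : 0 ≤ᵐ[μ] φ) (hψ : 0 ≤ᵐ[μ] ψ) (hφi : Integrable φ μ) (hψi : Integrable ψ μ)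
    (h : ∀ B, MeasurableSet B → ∫ ω in Y ⁻¹' B, φ ω ∂μ = ∫ ω in Y ⁻¹' B, ψ ω ∂μ) :
    ∫ ω, φ ω * Y ω ∂μ = ∫ ω, ψ ω * Y ω ∂μ := by
  -- both sides are the mean of the law of `Y` under the measure with density `φ`, resp. `ψ`
  have hlaw : ∀ {χ : Ω → ℝ}, 0 ≤ᵐ[μ] χ → Integrable χ μ →
      ∫ ω, χ ω * Y ω ∂μ = ∫ y, y ∂(μ.withDensity fun ω => ENNReal.ofReal (χ ω)).map Y := by
    intro χ hχ hχi
    rw [integral_map hY.aemeasurable (f := fun y => y) aestronglyMeasurable_id,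
      integral_withDensity_eq_integral_toReal_smul₀ hχi.1.aemeasurable.ennreal_ofReal
        (ae_of_all _ fun _ => ENNReal.ofReal_lt_top)]
    refine integral_congr_ae ?_
    filter_upwards [hχ] with ω hω
    simp [ENNReal.toReal_ofReal hω]
  rw [hlaw hφ hφi, hlaw hψ hψi]
  congr 1
  ext B hB
  rw [Measure.map_apply hY hB, Measure.map_apply hY hB, withDensity_apply _ (hY hB),
    withDensity_apply _ (hY hB),
    ← ofReal_integral_eq_lintegral_ofReal hφi.restrict (ae_restrict_of_ae hφ),
    ← ofReal_integral_eq_lintegral_ofReal hψi.restrict (ae_restrict_of_ae hψ), h B hB]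

section CondIndep

variable [StandardBorelSpace Ω] [IsFiniteMeasure μ] {hm : m ≤ mΩ} {A Y : Ω → ℝ}

theorem ProbabilityTheory.CondIndepFun.setIntegral_preimage_inter_eq_condExp
    (hind : CondIndepFun m hm Y A μ)
    (hA : Measurable A) (hAbin : ∀ ω, A ω = 0 ∨ A ω = 1) (hY : Measurable Y)
    {B : Set ℝ} {S : Set Ω} (hB : MeasurableSet B) (hS : MeasurableSet[m] S) :
    ∫ ω in Y ⁻¹' B ∩ S, A ω ∂μ = ∫ ω in Y ⁻¹' B ∩ S, (μ[A | m]) ω ∂μ := by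
  set T := Y ⁻¹' B
  have hT : MeasurableSet T := hY hB
  have hA1 := indicator_preimage_one_of_binary hAbin
  have hTA : T.indicator A = (T ∩ A ⁻¹' {1}).indicator (fun _ => 1) := by
    rw [← Set.indicator_indicator, hA1]
  have hfac := (condIndepFun_iff_condExp_inter_preimage_eq_mul hY hA).mp hind B {1} hB
    (measurableSet_singleton 1)
  rw [hA1] at hfac
  have hTAm : T.indicator (fun _ => 1) * μ[A | m] = T.indicator (μ[A | m]) := by
    ext ω; by_cases h : ω ∈ T <;> simp [h]
  have hTAm_int : Integrable (T.indicator (fun _ => 1) * μ[A | m]) μ :=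
    hTAm ▸ integrable_condExp.indicator hT
  rw [Set.inter_comm, ← setIntegral_indicator hT, ← setIntegral_indicator hT, hTA,
    ← setIntegral_condExp hm ((integrable_const 1).indicator
      (hT.inter (hA (measurableSet_singleton 1)))) hS, ← hTAm,
    ← setIntegral_condExp hm hTAm_int hS]
  refine setIntegral_congr_ae (hm S hS) ?_
  filter_upwards [hfac, condExp_mul_of_stronglyMeasurable_right stronglyMeasurable_condExp
    hTAm_int ((integrable_const 1).indicator hT)] with ω h1 h2 _
  rw [h1, h2]
  rfl

theorem ProbabilityTheory.CondIndepFun.condExp_mul_eq_mul_condExp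
    (hind : CondIndepFun m hm Y A μ)
    (hA : Measurable A) (hAbin : ∀ ω, A ω = 0 ∨ A ω = 1) (hY : Measurable Y)
    (hYi : Integrable Y μ) :
    μ[A * Y | m] =ᵐ[μ] μ[A | m] * μ[Y | m] := by
  have hA0 : ∀ ω, 0 ≤ A ω := fun ω => by rcases hAbin ω with h | h <;> simp [h]
  have hA1 : ∀ ω, ‖A ω‖ ≤ 1 := fun ω => norm_le_one_of_binary (hAbin ω)
  have hAb := abs_condExp_le_one_of_binary (μ := μ) (m := m) hAbin
  have hAi : Integrable A μ := integrable_of_binary hA hAbin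
  have hAY : Integrable (A * Y) μ := hYi.bdd_mul hA.aestronglyMeasurable (ae_of_all _ hA1)
  have hpY : Integrable (μ[A | m] * Y) μ := hYi.bdd_mul integrable_condExp.1 hAb
  refine (ae_eq_condExp_of_forall_setIntegral_eq hm hAY (fun S _ _ => ?_) (fun S hS _ => ?_)
    (stronglyMeasurable_condExp.mul stronglyMeasurable_condExp).aestronglyMeasurable).symm
  · exact (integrable_condExp.bdd_mul integrable_condExp.1 hAb).integrableOn
  calc ∫ ω in S, (μ[A | m] * μ[Y | m]) ω ∂μ
      = ∫ ω in S, (μ[μ[A | m] * Y | m]) ω ∂μ :=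
        setIntegral_congr_ae (hm S hS) ((condExp_mul_of_stronglyMeasurable_left
          stronglyMeasurable_condExp hpY hYi).mono fun ω h _ => h.symm)
    _ = ∫ ω in S, μ[A | m] ω * Y ω ∂μ := setIntegral_condExp hm hpY hS
    _ = ∫ ω in S, A ω * Y ω ∂μ := by
        refine (integral_mul_eq_of_forall_setIntegral_preimage_eq hY
          (ae_restrict_of_ae (ae_of_all _ hA0))
          (ae_restrict_of_ae (condExp_nonneg (ae_of_all _ hA0)))
          hAi.restrict integrable_condExp.restrict fun B hB => ?_).symm
        rw [Measure.restrict_restrict (hY hB)]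
        exact hind.setIntegral_preimage_inter_eq_condExp hA hAbin hY hB hS

end CondIndep

/-- The augmented IPW pseudo-outcome with propensity model `p` and outcome model `r`; the control
arm of the contrast is `aipw (1 - A) Y (1 - p) r₀`. -/
noncomputable def aipw (A Y p r : Ω → ℝ) : Ω → ℝ := fun ω => r ω + A ω * (Y ω - r ω) / p ω

theorem aipw_eq_add_inv_mul {A Y p r : Ω → ℝ} (hp : ∀ ω, p ω ≠ 0) :
    aipw A Y p r = r + p⁻¹ * (A * Y - A * r) := by
  ext ω
  simp only [aipw, Pi.add_apply, Pi.mul_apply, Pi.sub_apply, Pi.inv_apply]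
  field_simp [hp ω]

theorem aipw_apply_congr {A Y Y' p r : Ω → ℝ} {ω : Ω} (h : A ω * Y ω = A ω * Y' ω) :
    aipw A Y p r ω = aipw A Y' p r ω := by
  simp only [aipw, mul_sub, h]

section AIPW

variable [IsFiniteMeasure μ] {A Y p r : Ω → ℝ} {η C : ℝ}

theorem integrable_aipw (hm : m ≤ mΩ) (hA : Measurable A) (hAbin : ∀ ω, A ω = 0 ∨ A ω = 1)
    (hYi : Integrable Y μ) (hp : StronglyMeasurable[m] p) (hη : 0 < η) (hpη : ∀ ω, η ≤ p ω)
    (hr : StronglyMeasurable[m] r) (hrC : ∀ ω, |r ω| ≤ C) :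
    Integrable (aipw A Y p r) μ := by
  have hA1 : ∀ ω, ‖A ω‖ ≤ 1 := fun ω => norm_le_one_of_binary (hAbin ω)
  have hri : Integrable r μ := .of_bound (hr.mono hm).aestronglyMeasurable C (ae_of_all _ hrC)
  rw [aipw_eq_add_inv_mul fun ω => (hη.trans_le (hpη ω)).ne']
  refine hri.add (((hYi.bdd_mul hA.aestronglyMeasurable (ae_of_all _ hA1)).sub
    (hri.bdd_mul hA.aestronglyMeasurable (ae_of_all _ hA1))).bdd_mul (c := η⁻¹)
    (hp.mono hm).measurable.inv.aestronglyMeasurable (ae_of_all _ fun ω => ?_))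
  rw [Pi.inv_apply, norm_inv, Real.norm_of_nonneg (hη.le.trans (hpη ω))]
  exact inv_anti₀ hη (hpη ω)

variable [StandardBorelSpace Ω] {hm : m ≤ mΩ}

theorem condExp_aipw (hind : CondIndepFun m hm Y A μ) (hA : Measurable A)
    (hAbin : ∀ ω, A ω = 0 ∨ A ω = 1) (hY : Measurable Y) (hYi : Integrable Y μ)
    (hp : StronglyMeasurable[m] p) (hη : 0 < η) (hpη : ∀ ω, η ≤ p ω)
    (hr : StronglyMeasurable[m] r) (hrC : ∀ ω, |r ω| ≤ C) :
    μ[aipw A Y p r | m] =ᵐ[μ] fun ω => r ω + μ[A | m] ω * (μ[Y | m] ω - r ω) / p ω := by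
  have hp0 : ∀ ω, p ω ≠ 0 := fun ω => (hη.trans_le (hpη ω)).ne'
  have hA1 : ∀ ω, ‖A ω‖ ≤ 1 := fun ω => norm_le_one_of_binary (hAbin ω)
  have hAi : Integrable A μ := integrable_of_binary hA hAbin
  have hri : Integrable r μ := .of_bound (hr.mono hm).aestronglyMeasurable C (ae_of_all _ hrC)
  have hAY : Integrable (A * Y) μ := hYi.bdd_mul hA.aestronglyMeasurable (ae_of_all _ hA1)
  have hAr : Integrable (A * r) μ := hri.bdd_mul hA.aestronglyMeasurable (ae_of_all _ hA1)
  have hpinv : ∀ ω, ‖p⁻¹ ω‖ ≤ η⁻¹ := fun ω => by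
    rw [Pi.inv_apply, norm_inv, Real.norm_of_nonneg (hη.le.trans (hpη ω))]
    exact inv_anti₀ hη (hpη ω)
  have hpinvm : StronglyMeasurable[m] p⁻¹ := hp.measurable.inv.stronglyMeasurable
  have hrest : Integrable (p⁻¹ * (A * Y - A * r)) μ :=
    (hAY.sub hAr).bdd_mul (hpinvm.mono hm).aestronglyMeasurable (ae_of_all _ hpinv)
  rw [aipw_eq_add_inv_mul hp0]
  filter_upwards [condExp_add hri hrest m,
    condExp_stronglyMeasurable_mul_of_bound hm hpinvm (hAY.sub hAr) η⁻¹ (ae_of_all _ hpinv),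
    condExp_sub hAY hAr m, hind.condExp_mul_eq_mul_condExp hA hAbin hY hYi,
    condExp_mul_of_stronglyMeasurable_right hr hAr hAi] with ω h₁ h₂ h₃ h₄ h₅
  rw [h₁, Pi.add_apply, condExp_of_stronglyMeasurable hm hr hri, h₂, Pi.mul_apply, h₃,
    Pi.sub_apply, h₄, h₅]
  simp only [Pi.mul_apply, Pi.inv_apply]
  field_simp [hp0 ω]

theorem integral_aipw_eq_integral (hind : CondIndepFun m hm Y A μ) (hA : Measurable A)
    (hAbin : ∀ ω, A ω = 0 ∨ A ω = 1) (hY : Measurable Y) (hYi : Integrable Y μ)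
    (hp : StronglyMeasurable[m] p) (hη : 0 < η) (hpη : ∀ ω, η ≤ p ω)
    (hr : StronglyMeasurable[m] r) (hrC : ∀ ω, |r ω| ≤ C)
    (hpos : ∀ᵐ ω ∂μ, μ[A | m] ω ≠ 0)
    (hcorrect : p =ᵐ[μ] μ[A | m] ∨ μ[A * Y | m] =ᵐ[μ] r * μ[A | m]) :
    ∫ ω, aipw A Y p r ω ∂μ = ∫ ω, Y ω ∂μ := by
  suffices μ[aipw A Y p r | m] =ᵐ[μ] μ[Y | m] by
    rw [← integral_condExp hm, integral_congr_ae this, integral_condExp hm]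
  have hcond := condExp_aipw hind hA hAbin hY hYi hp hη hpη hr hrC
  rcases hcorrect with hprop | hout
  · filter_upwards [hcond, hprop, hpos] with ω h₁ h₂ h₃
    rw [h₁, h₂]
    field_simp
    ring
  · filter_upwards [hcond, hout, hind.condExp_mul_eq_mul_condExp hA hAbin hY hYi, hpos]
      with ω h₁ h₂ h₃ h₄
    have hYr : μ[Y | m] ω = r ω := by
      rw [h₂, Pi.mul_apply, Pi.mul_apply, mul_comm] at h₃
      exact (mul_left_cancel₀ h₄ h₃).symm
    rw [h₁, hYr, sub_self, mul_zero, zero_div, add_zero]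

end AIPW

theorem condExp_one_sub [IsFiniteMeasure μ] (hm : m ≤ mΩ) {A : Ω → ℝ} (hAi : Integrable A μ) :
    μ[fun ω => 1 - A ω | m] =ᵐ[μ] fun ω => 1 - μ[A | m] ω := by
  filter_upwards [condExp_sub (integrable_const 1) hAi m] with ω h
  rw [show (fun ω => 1 - A ω) = (fun _ => (1 : ℝ)) - A from rfl, h, Pi.sub_apply,
    condExp_const hm]

theorem ae_mul_eq_of_consistency {A Y Y0 Y1 : Ω → ℝ} (hAbin : ∀ ω, A ω = 0 ∨ A ω = 1)
    (hcons : ∀ᵐ ω ∂μ, Y ω = if A ω = 1 then Y1 ω else Y0 ω) :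
    (∀ᵐ ω ∂μ, A ω * Y ω = A ω * Y1 ω) ∧ ∀ᵐ ω ∂μ, (1 - A ω) * Y ω = (1 - A ω) * Y0 ω :=
  ⟨hcons.mono fun ω h => by rcases hAbin ω with hA | hA <;> simp [h, hA],
    hcons.mono fun ω h => by rcases hAbin ω with hA | hA <;> simp [h, hA]⟩

section Contrast

variable [StandardBorelSpace Ω] [IsProbabilityMeasure μ] {hm : m ≤ mΩ}
  {A Y Y0 Y1 p r₀ r₁ : Ω → ℝ} {η C : ℝ}

theorem integral_aipw_sub_aipw_sub_eq_zero_iff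
    (hind : CondIndepFun m hm (fun ω => (Y0 ω, Y1 ω)) A μ)
    (hA : Measurable A) (hAbin : ∀ ω, A ω = 0 ∨ A ω = 1) (hY0 : Measurable Y0)
    (hY1 : Measurable Y1) (hY0i : Integrable Y0 μ) (hY1i : Integrable Y1 μ)
    (hcons : ∀ᵐ ω ∂μ, Y ω = if A ω = 1 then Y1 ω else Y0 ω)
    (hp : StronglyMeasurable[m] p) (hη : 0 < η) (hpη : ∀ ω, η ≤ p ω ∧ p ω ≤ 1 - η)
    (hr₀ : StronglyMeasurable[m] r₀) (hr₁ : StronglyMeasurable[m] r₁)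
    (hr₀C : ∀ ω, |r₀ ω| ≤ C) (hr₁C : ∀ ω, |r₁ ω| ≤ C)
    (hpos : ∀ᵐ ω ∂μ, μ[A | m] ω ≠ 0 ∧ μ[A | m] ω ≠ 1)
    (hcorrect : p =ᵐ[μ] μ[A | m] ∨
      (μ[fun ω => A ω * Y ω | m] =ᵐ[μ] fun ω => r₁ ω * μ[A | m] ω) ∧
      (μ[fun ω => (1 - A ω) * Y ω | m] =ᵐ[μ] fun ω => r₀ ω * μ[fun ω => 1 - A ω | m] ω))
    (Δ : ℝ) :
    ∫ ω, (aipw A Y p r₁ ω - aipw (fun ω => 1 - A ω) Y (fun ω => 1 - p ω) r₀ ω - Δ) ∂μ = 0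
      ↔ Δ = ∫ ω, (Y1 ω - Y0 ω) ∂μ := by
  have hA' : Measurable fun ω => 1 - A ω := measurable_const.sub hA
  have hAbin' : ∀ ω, 1 - A ω = 0 ∨ 1 - A ω = 1 := fun ω => by
    rcases hAbin ω with h | h <;> simp [h]
  have hp' : StronglyMeasurable[m] fun ω => 1 - p ω := stronglyMeasurable_const.sub hp
  have hpη' : ∀ ω, η ≤ 1 - p ω := fun ω => by linarith [(hpη ω).2]
  have hq' := condExp_one_sub (μ := μ) hm (integrable_of_binary hA hAbin)
  obtain ⟨hAY₁, hAY₀⟩ := ae_mul_eq_of_consistency hAbin hcons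
  have harm₁ : ∫ ω, aipw A Y1 p r₁ ω ∂μ = ∫ ω, Y1 ω ∂μ := by
    refine integral_aipw_eq_integral (hind.comp measurable_snd measurable_id) hA hAbin hY1
      hY1i hp hη (fun ω => (hpη ω).1) hr₁ hr₁C (hpos.mono fun ω h => h.1) ?_
    exact hcorrect.imp id fun h => (condExp_congr_ae (hAY₁.mono fun ω h => h.symm)).trans h.1
  have harm₀ : ∫ ω, aipw (fun ω => 1 - A ω) Y0 (fun ω => 1 - p ω) r₀ ω ∂μ = ∫ ω, Y0 ω ∂μ := by
    refine integral_aipw_eq_integral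
      (hind.comp measurable_fst (measurable_const.sub measurable_id)) hA' hAbin' hY0 hY0i hp' hη
      hpη' hr₀ hr₀C ?_ ?_
    · filter_upwards [hpos, hq'] with ω h h' using by rw [h']; exact sub_ne_zero.mpr h.2.symm
    · refine hcorrect.imp (fun h => ?_)
        fun h => (condExp_congr_ae (hAY₀.mono fun ω h => h.symm)).trans h.2
      filter_upwards [h, hq'] with ω h h' using by rw [h', h]
  have hobs : (fun ω => aipw A Y p r₁ ω - aipw (fun ω => 1 - A ω) Y (fun ω => 1 - p ω) r₀ ω)
      =ᵐ[μ] fun ω => aipw A Y1 p r₁ ω - aipw (fun ω => 1 - A ω) Y0 (fun ω => 1 - p ω) r₀ ω := by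
    filter_upwards [hAY₁, hAY₀] with ω h₁ h₀
    rw [aipw_apply_congr (p := p) h₁, aipw_apply_congr (p := fun ω => 1 - p ω) h₀]
  have hint₁ := integrable_aipw hm hA hAbin hY1i hp hη (fun ω => (hpη ω).1) hr₁ hr₁C
  have hint₀ := integrable_aipw hm hA' hAbin' hY0i hp' hη hpη' hr₀ hr₀C
  rw [integral_sub ((hint₁.sub hint₀).congr hobs.symm) (integrable_const Δ), integral_congr_ae hobs,
    integral_sub hint₁ hint₀, harm₁, harm₀, ← integral_sub hY1i hY0i, integral_const,
    probReal_univ, one_smul, sub_eq_zero, eq_comm]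

end Contrast

end

theorem aiptw_stacked_ee_double_robust_identification_general
    {Ω 𝒳 : Type*} [MeasurableSpace Ω] [StandardBorelSpace Ω]
    [m𝒳 : MeasurableSpace 𝒳]
    {μ : Measure Ω} [IsProbabilityMeasure μ]
    {k q : ℕ}
    (X : Ω → 𝒳) (A Y Y0 Y1 : Ω → ℝ) (e : 𝒳 → ℝ)
    (hX : Measurable X) (hA : Measurable A)
    (hY0 : Measurable Y0) (hY1 : Measurable Y1)
    (hY0int : Integrable Y0 μ) (hY1int : Integrable Y1 μ)
    -- binary treatment
    (hAbin : ∀ ω, A ω = 0 ∨ A ω = 1)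
    -- consistency: Y = Y(A) almost surely
    (hcons : ∀ᵐ ω ∂μ, Y ω = if A ω = 1 then Y1 ω else Y0 ω)
    -- the propensity score e(X) is a version of E[A | σ(X)]
    (hps : μ[A | MeasurableSpace.comap X m𝒳] =ᵐ[μ] fun ω => e (X ω))
    -- positivity
    {η : ℝ} (hη : 0 < η)
    (hpos : ∀ᵐ ω ∂μ, η ≤ e (X ω) ∧ e (X ω) ≤ 1 - η)
    -- no unmeasured confounding: (Y(0), Y(1)) ⫫ A ∣ σ(X)
    (hignor : CondIndepFun (MeasurableSpace.comap X m𝒳) hX.comap_le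
      (fun ω => (Y0 ω, Y1 ω)) A μ)
    -- parametric propensity model e(·;α), α ∈ 𝒜 ⊂ ℝ^k, bounded away from 0 and 1
    (𝒜 : Set (Fin k → ℝ)) (emod : (Fin k → ℝ) → 𝒳 → ℝ)
    (hemod : ∀ α, Measurable (emod α))
    (hemodbdd : ∀ α ∈ 𝒜, ∀ x, η ≤ emod α x ∧ emod α x ≤ 1 - η)
    -- parametric outcome model m(a,x;β), β ∈ ℬ ⊂ ℝ^q, bounded
    (ℬ : Set (Fin q → ℝ)) (mmod : (Fin q → ℝ) → ℝ → 𝒳 → ℝ)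
    (hmmod : ∀ β a, Measurable (mmod β a))
    (Cm : ℝ) (hmmodbdd : ∀ β ∈ ℬ, ∀ a ∈ ({0, 1} : Set ℝ), ∀ x, |mmod β a x| ≤ Cm)
    -- fixed bounded measurable g and h
    (g : 𝒳 → Fin k → ℝ)
    (h : ℝ → 𝒳 → Fin q → ℝ)
    -- (α₀, β₀) ∈ 𝒜 × ℬ is the unique zero of the first two blocks
    (α₀ : Fin k → ℝ) (hα₀ : α₀ ∈ 𝒜) (β₀ : Fin q → ℝ) (hβ₀ : β₀ ∈ ℬ)
    (hzero₁ : (∫ ω, (A ω - emod α₀ (X ω)) • g (X ω) ∂μ) = 0)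
    (hzero₂ : (∫ ω, (Y ω - mmod β₀ (A ω) (X ω)) • h (A ω) (X ω) ∂μ) = 0)
    (huniq : ∀ α ∈ 𝒜, ∀ β ∈ ℬ,
      (∫ ω, (A ω - emod α (X ω)) • g (X ω) ∂μ) = 0 →
      (∫ ω, (Y ω - mmod β (A ω) (X ω)) • h (A ω) (X ω) ∂μ) = 0 →
      α = α₀ ∧ β = β₀)
    -- EITHER the propensity model OR the outcome model is correctly specified
    (hcorrect :
      (∀ᵐ ω ∂μ, emod α₀ (X ω) = e (X ω)) ∨
      (∀ a ∈ ({0, 1} : Set ℝ),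
        μ[fun ω => (if A ω = a then (1 : ℝ) else 0) * Y ω | MeasurableSpace.comap X m𝒳]
          =ᵐ[μ] fun ω => mmod β₀ a (X ω) *
            (μ[fun ω' => (if A ω' = a then (1 : ℝ) else 0) | MeasurableSpace.comap X m𝒳]) ω)) :
    ∀ α ∈ 𝒜, ∀ β ∈ ℬ, ∀ Δ' : ℝ,
      (((∫ ω, (A ω - emod α (X ω)) • g (X ω) ∂μ) = 0) ∧
        ((∫ ω, (Y ω - mmod β (A ω) (X ω)) • h (A ω) (X ω) ∂μ) = 0) ∧
        (∫ ω, ((mmod β 1 (X ω) + A ω * (Y ω - mmod β 1 (X ω)) / emod α (X ω))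
          - (mmod β 0 (X ω) + (1 - A ω) * (Y ω - mmod β 0 (X ω)) / (1 - emod α (X ω)))
          - Δ') ∂μ) = 0)
      ↔ (α = α₀ ∧ β = β₀ ∧ Δ' = ∫ ω, (Y1 ω - Y0 ω) ∂μ) := by
  intro α hα β hβ Δ'
  have hXm : Measurable[MeasurableSpace.comap X m𝒳] X := comap_measurable X
  have hite₁ : ∀ ω, (if A ω = 1 then (1 : ℝ) else 0) = A ω := fun ω => by
    rcases hAbin ω with h | h <;> simp [h]
  have hite₀ : ∀ ω, (if A ω = 0 then (1 : ℝ) else 0) = 1 - A ω := fun ω => by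
    rcases hAbin ω with h | h <;> simp [h]
  have hthird := integral_aipw_sub_aipw_sub_eq_zero_iff (p := fun ω => emod α₀ (X ω))
    (r₀ := fun ω => mmod β₀ 0 (X ω)) (r₁ := fun ω => mmod β₀ 1 (X ω))
    hignor hA hAbin hY0 hY1 hY0int hY1int
    hcons ((hemod α₀).comp hXm).stronglyMeasurable hη (fun ω => hemodbdd α₀ hα₀ (X ω))
    ((hmmod β₀ 0).comp hXm).stronglyMeasurable ((hmmod β₀ 1).comp hXm).stronglyMeasurable
    (fun ω => hmmodbdd β₀ hβ₀ 0 (by simp) (X ω)) (fun ω => hmmodbdd β₀ hβ₀ 1 (by simp) (X ω))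
    (by filter_upwards [hps, hpos] with ω h₁ h₂
        rw [h₁]; exact ⟨(hη.trans_le h₂.1).ne', (by linarith : e (X ω) < 1).ne⟩)
    (hcorrect.imp (fun hprop => Filter.EventuallyEq.trans hprop hps.symm) fun hout =>
      ⟨by simpa only [hite₁] using hout 1 (by simp), by simpa only [hite₀] using hout 0 (by simp)⟩)
    Δ'
  constructor
  · rintro ⟨h₁, h₂, h₃⟩
    obtain ⟨rfl, rfl⟩ := huniq α hα β hβ h₁ h₂
    exact ⟨rfl, rfl, hthird.mp h₃⟩
  · rintro ⟨rfl, rfl, rfl⟩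
    exact ⟨hzero₁, hzero₂, hthird.mpr rfl⟩

/-- **Double robustness of the stacked AIPTW estimating equation (Example 3).**
Suppose `(α₀, β₀)` is the unique zero of the first two blocks
`E[g(X)(A − e(X;α))] = 0` and `E[h(A,X)(Y − m(A,X;β))] = 0`, and EITHER the
propensity model is correct at `α₀` OR the outcome model is correct at `β₀`.
Then, under consistency, positivity, and no unmeasured confounding,
`E[U(O;θ)] = 0` if and only if `θ = (α₀, β₀, Δ)`, where `Δ = E[Y(1) − Y(0)]`. -/
theorem aiptw_stacked_ee_double_robust_identification
    {Ω 𝒳 : Type*} [MeasurableSpace Ω] [StandardBorelSpace Ω]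
    [m𝒳 : MeasurableSpace 𝒳]
    {μ : Measure Ω} [IsProbabilityMeasure μ]
    {k q : ℕ}
    (X : Ω → 𝒳) (A Y Y0 Y1 : Ω → ℝ) (e : 𝒳 → ℝ)
    (hX : Measurable X) (hA : Measurable A) (hY : Measurable Y)
    (hY0 : Measurable Y0) (hY1 : Measurable Y1) (he : Measurable e)
    (hY0int : Integrable Y0 μ) (hY1int : Integrable Y1 μ)
    -- binary treatment
    (hAbin : ∀ ω, A ω = 0 ∨ A ω = 1)
    -- consistency: Y = Y(A) almost surely
    (hcons : ∀ᵐ ω ∂μ, Y ω = if A ω = 1 then Y1 ω else Y0 ω)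
    -- the propensity score e(X) is a version of E[A | σ(X)]
    (hps : μ[A | MeasurableSpace.comap X m𝒳] =ᵐ[μ] fun ω => e (X ω))
    -- positivity
    {η : ℝ} (hη : 0 < η)
    (hpos : ∀ᵐ ω ∂μ, η ≤ e (X ω) ∧ e (X ω) ≤ 1 - η)
    -- no unmeasured confounding: (Y(0), Y(1)) ⫫ A ∣ σ(X)
    (hignor : CondIndepFun (MeasurableSpace.comap X m𝒳) hX.comap_le
      (fun ω => (Y0 ω, Y1 ω)) A μ)
    -- parametric propensity model e(·;α), α ∈ 𝒜 ⊂ ℝ^k, bounded away from 0 and 1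
    (𝒜 : Set (Fin k → ℝ)) (emod : (Fin k → ℝ) → 𝒳 → ℝ)
    (hemod : ∀ α, Measurable (emod α))
    (hemodbdd : ∀ α ∈ 𝒜, ∀ x, η ≤ emod α x ∧ emod α x ≤ 1 - η)
    -- parametric outcome model m(a,x;β), β ∈ ℬ ⊂ ℝ^q, bounded
    (ℬ : Set (Fin q → ℝ)) (mmod : (Fin q → ℝ) → ℝ → 𝒳 → ℝ)
    (hmmod : ∀ β a, Measurable (mmod β a))
    (Cm : ℝ) (hmmodbdd : ∀ β ∈ ℬ, ∀ a ∈ ({0, 1} : Set ℝ), ∀ x, |mmod β a x| ≤ Cm)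
    -- fixed bounded measurable g and h
    (g : 𝒳 → Fin k → ℝ) (hg : Measurable g) (Cg : ℝ) (hgbdd : ∀ x, ‖g x‖ ≤ Cg)
    (h : ℝ → 𝒳 → Fin q → ℝ) (hh : ∀ a ∈ ({0, 1} : Set ℝ), Measurable (h a))
    (Ch : ℝ) (hhbdd : ∀ a ∈ ({0, 1} : Set ℝ), ∀ x, ‖h a x‖ ≤ Ch)
    -- (α₀, β₀) ∈ 𝒜 × ℬ is the unique zero of the first two blocks
    (α₀ : Fin k → ℝ) (hα₀ : α₀ ∈ 𝒜) (β₀ : Fin q → ℝ) (hβ₀ : β₀ ∈ ℬ)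
    (hzero₁ : (∫ ω, (A ω - emod α₀ (X ω)) • g (X ω) ∂μ) = 0)
    (hzero₂ : (∫ ω, (Y ω - mmod β₀ (A ω) (X ω)) • h (A ω) (X ω) ∂μ) = 0)
    (huniq : ∀ α ∈ 𝒜, ∀ β ∈ ℬ,
      (∫ ω, (A ω - emod α (X ω)) • g (X ω) ∂μ) = 0 →
      (∫ ω, (Y ω - mmod β (A ω) (X ω)) • h (A ω) (X ω) ∂μ) = 0 →
      α = α₀ ∧ β = β₀)
    -- EITHER the propensity model OR the outcome model is correctly specified
    (hcorrect :
      (∀ᵐ ω ∂μ, emod α₀ (X ω) = e (X ω)) ∨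
      (∀ a ∈ ({0, 1} : Set ℝ),
        μ[fun ω => (if A ω = a then (1 : ℝ) else 0) * Y ω | MeasurableSpace.comap X m𝒳]
          =ᵐ[μ] fun ω => mmod β₀ a (X ω) *
            (μ[fun ω' => (if A ω' = a then (1 : ℝ) else 0) | MeasurableSpace.comap X m𝒳]) ω)) :
    ∀ α ∈ 𝒜, ∀ β ∈ ℬ, ∀ Δ' : ℝ,
      (((∫ ω, (A ω - emod α (X ω)) • g (X ω) ∂μ) = 0) ∧
        ((∫ ω, (Y ω - mmod β (A ω) (X ω)) • h (A ω) (X ω) ∂μ) = 0) ∧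
        (∫ ω, ((mmod β 1 (X ω) + A ω * (Y ω - mmod β 1 (X ω)) / emod α (X ω))
          - (mmod β 0 (X ω) + (1 - A ω) * (Y ω - mmod β 0 (X ω)) / (1 - emod α (X ω)))
          - Δ') ∂μ) = 0)
      ↔ (α = α₀ ∧ β = β₀ ∧ Δ' = ∫ ω, (Y1 ω - Y0 ω) ∂μ) :=
  aiptw_stacked_ee_double_robust_identification_general (m𝒳 := m𝒳) X A Y Y0 Y1 e hX hA hY0 hY1
    hY0int hY1int hAbin hcons hps hη hpos hignor 𝒜 emod hemod hemodbdd ℬ mmod hmmod Cm hmmodbdd g h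
    α₀ hα₀ β₀ hβ₀ hzero₁ hzero₂ huniq hcorrect
end

section
/- Exact equivalence of online and offline estimators for affine estimating functions: suppose U(o; θ) = a(o) − B(o)θ where a(o) ∈ ℝ^p and B(o) is a p×p matrix, and suppose for each b the cumulative matrix Σ_{j≤b} Σ_{o ∈ D_j} B(o) is invertible. Define the online estimators recursively: θ̃₁ solves U₁(D₁; θ̃₁) = 0, and for b ≥ 2, θ̃_b solves Σ_{j=1}^{b−1} S_j(D_j; θ̃_j)(θ̃_{b−1} − θ̃_b) + U_b(D_b; θ̃_b) = 0, where S_j(D_j; θ) = −∂U_j(D_j; θ)/∂θᵀ. Then for every b ≥ 1, θ̃_b equals the offline estimator θ̂_b⋆ solving the aggregated equation Σ_{j=1}^{b} U_j(D_j; θ̂_b⋆) = 0. -/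
/-!
For affine `U` the batch sensitivity `S_j = Σ_{o ∈ D_j} B(o)` does not depend on `θ`. Writing
`A_b = Σ_{j ≤ b} S_j` and `v_b = Σ_{j ≤ b} Σ_{o ∈ D_j} a(o)`, the online update says
`A_b θ̃_b - A_{b+1} θ̃_{b+1} + (v_{b+1} - v_b) = 0`, so `A_b θ̃_b = v_b` for all `b` by induction.
The offline equation is `A_b θ̂_b⋆ = v_b`, and `A_b` is invertible.
-/

open Finset

theorem List.sum_map_sub_apply {ι F α M : Type*} [FunLike F α M] [AddCommGroup M]
    [AddCommMonoid F] [IsZeroApply F α M] [IsAddApply F α M]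
    (l : List ι) (a : ι → M) (B : ι → F) (x : α) :
    (l.map fun i => a i - B i x).sum = (l.map a).sum - (l.map B).sum x := by
  induction l with
  | nil => simp
  | cons i l ih =>
    simp only [List.map_cons, List.sum_cons, add_apply, ih]
    abel

theorem sum_range_apply_eq_of_online_update {F α : Type*} [FunLike F α α] [AddCommGroup α]
    [AddCommMonoid F] [AddMonoidHomClass F α α] [IsZeroApply F α α] [IsAddApply F α α]
    {S : ℕ → F} {c θ : ℕ → α}
    (h0 : c 0 - S 0 (θ 0) = 0)
    (hstep : ∀ b, (∑ j ∈ range (b + 1), S j) (θ b - θ (b + 1)) +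
      (c (b + 1) - S (b + 1) (θ (b + 1))) = 0) (b : ℕ) :
    (∑ j ∈ range (b + 1), S j) (θ b) = ∑ j ∈ range (b + 1), c j := by
  induction b with
  | zero => simpa using (sub_eq_zero.mp h0).symm
  | succ b ih =>
    have h := hstep b
    rw [map_sub, ih] at h
    rw [sum_range_succ, sum_range_succ _ (b + 1), add_apply, eq_comm, ← sub_eq_zero, ← h]
    abel

/-- **Exact equivalence of online and offline estimators for affine estimating functions.**
Suppose `U(o;θ) = a(o) − B(o)θ`, so that for any batch `D` the batch sensitivity matrix is
`S(D;θ) = Σ_{o∈D} B(o)`, independent of `θ`, and suppose each cumulative matrix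
`Σ_{j≤b} Σ_{o∈D_j} B(o)` is invertible. If `θ̃₀` solves the first-batch equation and each
`θ̃_{b+1}` solves the online estimating equation
`(Σ_{j≤b} S_j(D_j;θ̃_j))(θ̃_b − θ̃_{b+1}) + U_{b+1}(D_{b+1};θ̃_{b+1}) = 0`,
then for every `b`, `θ̃_b` equals the offline estimator `θ̂_b⋆` solving the aggregated
equation `Σ_{j≤b} U_j(D_j;θ̂_b⋆) = 0`. -/
theorem online_equals_offline_affine
    {𝒪 : Type*} {p : ℕ}
    (a : 𝒪 → EuclideanSpace ℝ (Fin p))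
    (B : 𝒪 → EuclideanSpace ℝ (Fin p) →L[ℝ] EuclideanSpace ℝ (Fin p))
    (D : ℕ → List 𝒪)
    -- the cumulative sensitivity matrices are invertible
    (hinv : ∀ b : ℕ, IsUnit (∑ j ∈ Finset.range (b + 1), ((D j).map B).sum))
    (θt θoff : ℕ → EuclideanSpace ℝ (Fin p))
    -- the initial estimator solves the first-batch estimating equation
    (hinit : ((D 0).map fun o => a o - B o (θt 0)).sum = 0)
    -- online updates: Σ_{j≤b} S_j(D_j;θ̃_j) (θ̃_b − θ̃_{b+1}) + U_{b+1}(D_{b+1};θ̃_{b+1}) = 0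
    (hrec : ∀ b : ℕ,
      (∑ j ∈ Finset.range (b + 1), ((D j).map B).sum) (θt b - θt (b + 1)) +
        ((D (b + 1)).map fun o => a o - B o (θt (b + 1))).sum = 0)
    -- the offline estimators solve the aggregated estimating equations
    (hoff : ∀ b : ℕ,
      ∑ j ∈ Finset.range (b + 1), ((D j).map fun o => a o - B o (θoff b)).sum = 0) :
    ∀ b : ℕ, θt b = θoff b := by
  intro b
  simp only [List.sum_map_sub_apply] at hinit hrec hoff
  have honline := sum_range_apply_eq_of_online_update (S := fun j => ((D j).map B).sum)
    (c := fun j => ((D j).map a).sum) hinit hrec b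
  have hoffline : (∑ j ∈ range (b + 1), ((D j).map B).sum) (θoff b) =
      ∑ j ∈ range (b + 1), ((D j).map a).sum := by
    rw [_root_.sum_apply, eq_comm, ← sub_eq_zero, ← sum_sub_distrib, hoff]
  exact (ContinuousLinearMap.isHomeomorph_of_isUnit (hinv b)).injective
    (honline.trans hoffline.symm)
end

section
/- Closed-form two-batch online update: under the two-batch setting, if the matrix S₁(D₁; θ̂₁) + S₂(D₂; θ̃₂) appearing below is invertible and U is affine in θ, i.e. U(o; θ) = a(o) − B(o)θ with Σ_{o∈D₁} B(o) and Σ_{o∈D₁∪D₂} B(o) invertible, then the unique solution θ̃₂ of the online estimating equation S₁(D₁; θ̂₁)(θ̂₁ − θ̃₂) + U₂(D₂; θ̃₂) = 0 is θ̃₂ = (Σ_{o∈D₁∪D₂} B(o))⁻¹ (Σ_{o∈D₁∪D₂} a(o)), i.e. it coincides exactly with the offline estimator θ̂₂⋆ solving U₁(D₁; θ̂₂⋆) + U₂(D₂; θ̂₂⋆) = 0. -/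
/-!
For an affine score `U(o; θ) = a(o) - B(o) θ` the linearisation used by the online update is exact:
once `θ̂₁` solves the first-batch equation, `S₁ (θ̂₁ - θ) = U₁(D₁; θ)` for every `θ`. The online
equation is therefore literally the offline equation `(Σ_{D₁ ++ D₂} B) θ = Σ_{D₁ ++ D₂} a`, whose
unique solution is read off by inverting `Σ_{D₁ ++ D₂} B`.
-/

namespace List

variable {ι R M N : Type*} [Semiring R] [TopologicalSpace M] [TopologicalSpace N] [AddCommGroup N]
  [Module R N] [IsTopologicalAddGroup N]

theorem sum_map_sub_clm_apply [AddCommMonoid M] [Module R M] (a : ι → N) (B : ι → M →L[R] N)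
    (D : List ι) (θ : M) :
    (D.map fun o => a o - B o θ).sum = (D.map a).sum - (D.map B).sum θ := by
  induction D with
  | nil => simp
  | cons o D ih => simp only [map_cons, sum_cons, ih, add_apply]; abel

theorem sum_map_sub_clm_apply_eq_zero_iff [AddCommMonoid M] [Module R M] (a : ι → N)
    (B : ι → M →L[R] N) (D : List ι) (θ : M) :
    (D.map fun o => a o - B o θ).sum = 0 ↔ (D.map B).sum θ = (D.map a).sum := by
  rw [sum_map_sub_clm_apply, sub_eq_zero, eq_comm]

theorem sum_map_clm_apply_sub_of_apply_eq [AddCommGroup M] [Module R M] {a : ι → N}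
    {B : ι → M →L[R] N} {D : List ι} {θ₀ : M} (h₀ : (D.map B).sum θ₀ = (D.map a).sum) (θ : M) :
    (D.map B).sum (θ₀ - θ) = (D.map fun o => a o - B o θ).sum := by
  rw [map_sub, h₀, sum_map_sub_clm_apply]

end List

theorem ContinuousLinearMap.ring_inverse_apply_apply {R M : Type*} [Semiring R]
    [TopologicalSpace M] [AddCommMonoid M] [Module R M] {S : M →L[R] M} (hS : IsUnit S) (x : M) :
    Ring.inverse S (S x) = x := by
  rw [← mul_apply_eq_comp, Ring.inverse_mul_cancel S hS, one_apply_eq_self]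

open List in
theorem two_batch_online_closed_form_general
    {𝒪 : Type*} {p : ℕ}
    (a : 𝒪 → EuclideanSpace ℝ (Fin p))
    (B : 𝒪 → EuclideanSpace ℝ (Fin p) →L[ℝ] EuclideanSpace ℝ (Fin p))
    (D₁ D₂ : List 𝒪)
    (θhat₁ θt₂ θoff : EuclideanSpace ℝ (Fin p))
    -- invertibility of Σ_{o∈D₁} B(o) and of Σ_{o∈D₁∪D₂} B(o) = S₁(D₁;θ̂₁) + S₂(D₂;θ̃₂)
    (hinv₁₂ : IsUnit ((D₁ ++ D₂).map B).sum)
    -- the initial estimator θ̂₁ solves the first-batch estimating equation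
    (hinit : (D₁.map fun o => a o - B o θhat₁).sum = 0)
    -- θ̃₂ solves the online estimating equation S₁(D₁;θ̂₁)(θ̂₁ − θ̃₂) + U₂(D₂;θ̃₂) = 0
    (honline : (D₁.map B).sum (θhat₁ - θt₂) + (D₂.map fun o => a o - B o θt₂).sum = 0)
    -- θ̂₂⋆ solves the aggregated offline estimating equation U₁(D₁;θ) + U₂(D₂;θ) = 0
    (hoffline : (D₁.map fun o => a o - B o θoff).sum +
      (D₂.map fun o => a o - B o θoff).sum = 0) :
    θt₂ = Ring.inverse ((D₁ ++ D₂).map B).sum ((D₁ ++ D₂).map a).sum ∧ θt₂ = θoff := by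
  have hθhat₁ := (sum_map_sub_clm_apply_eq_zero_iff a B D₁ θhat₁).1 hinit
  rw [sum_map_clm_apply_sub_of_apply_eq hθhat₁, ← sum_append, ← map_append,
    sum_map_sub_clm_apply_eq_zero_iff] at honline
  rw [← sum_append, ← map_append, sum_map_sub_clm_apply_eq_zero_iff] at hoffline
  have hcancel := ContinuousLinearMap.ring_inverse_apply_apply hinv₁₂
  exact ⟨by rw [← honline, hcancel], by rw [← hcancel θt₂, honline, ← hoffline, hcancel]⟩

/-- **Closed-form two-batch online update.**
For an affine estimating function `U(o;θ) = a(o) − B(o)θ` (so that batch sensitivity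
matrices `S(D;θ) = Σ_{o∈D} B(o)` do not depend on `θ`), with `Σ_{o∈D₁} B(o)` and
`S₁(D₁;θ̂₁) + S₂(D₂;θ̃₂) = Σ_{o∈D₁∪D₂} B(o)` invertible, the unique solution `θ̃₂` of the
online estimating equation `S₁(D₁;θ̂₁)(θ̂₁ − θ̃₂) + U₂(D₂;θ̃₂) = 0` is
`θ̃₂ = (Σ_{o∈D₁∪D₂} B(o))⁻¹ (Σ_{o∈D₁∪D₂} a(o))`, i.e. it coincides exactly with the
offline estimator `θ̂₂⋆` solving `U₁(D₁;θ̂₂⋆) + U₂(D₂;θ̂₂⋆) = 0`. -/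
theorem two_batch_online_closed_form
    {𝒪 : Type*} {p : ℕ}
    (a : 𝒪 → EuclideanSpace ℝ (Fin p))
    (B : 𝒪 → EuclideanSpace ℝ (Fin p) →L[ℝ] EuclideanSpace ℝ (Fin p))
    (D₁ D₂ : List 𝒪)
    (θhat₁ θt₂ θoff : EuclideanSpace ℝ (Fin p))
    -- invertibility of Σ_{o∈D₁} B(o) and of Σ_{o∈D₁∪D₂} B(o) = S₁(D₁;θ̂₁) + S₂(D₂;θ̃₂)
    (hinv₁ : IsUnit (D₁.map B).sum)
    (hinv₁₂ : IsUnit ((D₁ ++ D₂).map B).sum)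
    -- the initial estimator θ̂₁ solves the first-batch estimating equation
    (hinit : (D₁.map fun o => a o - B o θhat₁).sum = 0)
    -- θ̃₂ solves the online estimating equation S₁(D₁;θ̂₁)(θ̂₁ − θ̃₂) + U₂(D₂;θ̃₂) = 0
    (honline : (D₁.map B).sum (θhat₁ - θt₂) + (D₂.map fun o => a o - B o θt₂).sum = 0)
    -- θ̂₂⋆ solves the aggregated offline estimating equation U₁(D₁;θ) + U₂(D₂;θ) = 0
    (hoffline : (D₁.map fun o => a o - B o θoff).sum +
      (D₂.map fun o => a o - B o θoff).sum = 0) :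
    θt₂ = Ring.inverse ((D₁ ++ D₂).map B).sum ((D₁ ++ D₂).map a).sum ∧ θt₂ = θoff :=
  two_batch_online_closed_form_general a B D₁ D₂ θhat₁ θt₂ θoff hinv₁₂ hinit honline hoffline
end
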